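/- arXiv:1403.5906 — 9 statements merged into one kernel-verified Lean document; each statement's English description precedes it below -/
import Mathlib

section
/- The characteristic function of the deterministic newsvendor game is super-additive: for any two disjoint coalitions S1, S2 ⊆ N, v̄(S1) + v̄(S2) ≤ v̄(S1 ∪ S2). -/
open MeasureTheory

/-!
Separate orders `y₁`, `y₂` against demands `D₁`, `D₂` are matched by the pooled order `y₁ + y₂`
against `D₁ + D₂`: the linear terms add up, while the expected leftover
`E[(y₁ + y₂ - D₁ - D₂)⁺]` is at most `E[(y₁ - D₁)⁺] + E[(y₂ - D₂)⁺]` because the positive part is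
subadditive. Taking suprema gives super-additivity; the suprema are finite since the profit of any
order is at most `p · E[D]`.
-/

namespace Newsvendor

variable {Ω : Type*} [MeasurableSpace Ω] (μ : Measure Ω) (p c : ℝ)

/-- Expected profit `E[p · min(D, y) - c · y]` of ordering `y` units against the demand `D`. -/
noncomputable def profit (D : Ω → ℝ) (y : ℝ) : ℝ :=
  (p - c) * y - p * ∫ ω, max (y - D ω) 0 ∂μ

variable {μ p c}

theorem integrable_leftover {D : Ω → ℝ} [IsFiniteMeasure μ] (hD : Integrable D μ) (y : ℝ) :
    Integrable (fun ω => max (y - D ω) 0) μ :=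
  ((integrable_const y).sub hD).pos_part

theorem profit_le_mul_integral [IsProbabilityMeasure μ] (hp : 0 ≤ p) (hc : 0 ≤ c)
    {D : Ω → ℝ} (hD : Integrable D μ) {y : ℝ} (hy : 0 ≤ y) :
    profit μ p c D y ≤ p * ∫ ω, D ω ∂μ := by
  have hleftover : y - ∫ ω, D ω ∂μ ≤ ∫ ω, max (y - D ω) 0 ∂μ := by
    calc y - ∫ ω, D ω ∂μ = ∫ ω, (y - D ω) ∂μ := by
          rw [integral_sub (integrable_const y) hD, integral_const, probReal_univ, one_smul]
      _ ≤ ∫ ω, max (y - D ω) 0 ∂μ :=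
          integral_mono ((integrable_const y).sub hD) (integrable_leftover hD y)
            fun ω => le_max_left _ _
  unfold profit
  nlinarith [mul_le_mul_of_nonneg_left hleftover hp, mul_nonneg hc hy]

theorem bddAbove_range_profit [IsProbabilityMeasure μ] (hp : 0 ≤ p) (hc : 0 ≤ c)
    {D : Ω → ℝ} (hD : Integrable D μ) :
    BddAbove (Set.range fun y : {y : ℝ // 0 ≤ y} => profit μ p c D y) :=
  ⟨p * ∫ ω, D ω ∂μ, by
    rintro _ ⟨y, rfl⟩
    exact profit_le_mul_integral hp hc hD y.2⟩

theorem profit_add_profit_le [IsFiniteMeasure μ] (hp : 0 ≤ p) {D₁ D₂ : Ω → ℝ}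
    (hD₁ : Integrable D₁ μ) (hD₂ : Integrable D₂ μ) (y₁ y₂ : ℝ) :
    profit μ p c D₁ y₁ + profit μ p c D₂ y₂ ≤ profit μ p c (D₁ + D₂) (y₁ + y₂) := by
  have hleftover : ∫ ω, max (y₁ + y₂ - (D₁ + D₂) ω) 0 ∂μ ≤
      ∫ ω, max (y₁ - D₁ ω) 0 ∂μ + ∫ ω, max (y₂ - D₂ ω) 0 ∂μ := by
    rw [← integral_add (integrable_leftover hD₁ y₁) (integrable_leftover hD₂ y₂)]
    refine integral_mono (integrable_leftover (hD₁.add hD₂) _)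
      ((integrable_leftover hD₁ y₁).add (integrable_leftover hD₂ y₂)) fun ω => ?_
    calc max (y₁ + y₂ - (D₁ + D₂) ω) 0 = max ((y₁ - D₁ ω) + (y₂ - D₂ ω)) (0 + 0) := by
          simp only [Pi.add_apply, add_zero]; ring_nf
      _ ≤ max (y₁ - D₁ ω) 0 + max (y₂ - D₂ ω) 0 := max_add_add_le_max_add_max
  unfold profit
  nlinarith [mul_le_mul_of_nonneg_left hleftover hp]

theorem iSup_profit_add_iSup_profit_le [IsProbabilityMeasure μ] (hp : 0 ≤ p) (hc : 0 ≤ c)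
    {D₁ D₂ : Ω → ℝ} (hD₁ : Integrable D₁ μ) (hD₂ : Integrable D₂ μ) :
    (⨆ y : {y : ℝ // 0 ≤ y}, profit μ p c D₁ y) + (⨆ y : {y : ℝ // 0 ≤ y}, profit μ p c D₂ y) ≤
      ⨆ y : {y : ℝ // 0 ≤ y}, profit μ p c (D₁ + D₂) y := by
  have : Nonempty {y : ℝ // 0 ≤ y} := ⟨⟨0, le_rfl⟩⟩
  refine ciSup_add_ciSup_le fun y₁ y₂ => (profit_add_profit_le hp hD₁ hD₂ y₁ y₂).trans ?_
  exact le_ciSup (f := fun y : {y : ℝ // 0 ≤ y} => profit μ p c (D₁ + D₂) y)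
    (bddAbove_range_profit hp hc (hD₁.add hD₂)) ⟨y₁ + y₂, add_nonneg y₁.2 y₂.2⟩

end Newsvendor

theorem stmt_0_general {ι Ω : Type*} [DecidableEq ι] [MeasurableSpace Ω]
    (μ : Measure Ω) [IsProbabilityMeasure μ]
    (p c : ℝ) (hc : 0 < c) (hcp : c < p)
    (d : ι → Ω → ℝ)
    (hdi : ∀ i, Integrable (d i) μ)
    (S1 S2 : Finset ι) (hdisj : Disjoint S1 S2) :
    (⨆ y : {y : ℝ // 0 ≤ y}, ((p - c) * y.1 - p * ∫ ω, max (y.1 - ∑ i ∈ S1, d i ω) 0 ∂μ)) +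
      (⨆ y : {y : ℝ // 0 ≤ y}, ((p - c) * y.1 - p * ∫ ω, max (y.1 - ∑ i ∈ S2, d i ω) 0 ∂μ)) ≤
    ⨆ y : {y : ℝ // 0 ≤ y}, ((p - c) * y.1 - p * ∫ ω, max (y.1 - ∑ i ∈ S1 ∪ S2, d i ω) 0 ∂μ) := by
  have hdemand : ∀ S : Finset ι, Integrable (fun ω => ∑ i ∈ S, d i ω) μ := fun S =>
    integrable_finsetSum S fun i _ => hdi i
  have hunion : (fun ω => ∑ i ∈ S1 ∪ S2, d i ω) =
      (fun ω => ∑ i ∈ S1, d i ω) + fun ω => ∑ i ∈ S2, d i ω :=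
    funext fun ω => Finset.sum_union hdisj
  have := Newsvendor.iSup_profit_add_iSup_profit_le (hc.trans hcp).le hc.le
    (hdemand S1) (hdemand S2)
  rwa [← hunion] at this

/-- Super-additivity of the characteristic function of the deterministic newsvendor game:
for disjoint coalitions `S1`, `S2`, one has `v̄(S1) + v̄(S2) ≤ v̄(S1 ∪ S2)`, where
`v̄(S) = sup_{y ≥ 0} ((p-c)·y - p·E[(y - d̃(S))⁺])`. -/
theorem stmt_0 {ι Ω : Type*} [Fintype ι] [DecidableEq ι] [MeasurableSpace Ω]
    (μ : Measure Ω) [IsProbabilityMeasure μ]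
    (p c : ℝ) (hc : 0 < c) (hcp : c < p)
    (d : ι → Ω → ℝ) (hd0 : ∀ i ω, 0 ≤ d i ω)
    (hdi : ∀ i, Integrable (d i) μ)
    (S1 S2 : Finset ι) (hdisj : Disjoint S1 S2) :
    (⨆ y : {y : ℝ // 0 ≤ y}, ((p - c) * y.1 - p * ∫ ω, max (y.1 - ∑ i ∈ S1, d i ω) 0 ∂μ)) +
      (⨆ y : {y : ℝ // 0 ≤ y}, ((p - c) * y.1 - p * ∫ ω, max (y.1 - ∑ i ∈ S2, d i ω) 0 ∂μ)) ≤
    ⨆ y : {y : ℝ // 0 ≤ y}, ((p - c) * y.1 - p * ∫ ω, max (y.1 - ∑ i ∈ S1 ∪ S2, d i ω) 0 ∂μ) :=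
  stmt_0_general μ p c hc hcp d hdi S1 S2 hdisj
end

section
/- A robust cooperative game (N, A, V(U)) has an imputation if and only if there exists an action a ∈ A(N) such that Σ_{i∈N} v_max(a,{i}) ≤ 1, where v_max(a,{i}) = max_{u∈U} (max_{α∈A({i})} v_u(α,{i})) / v_u(a,N). -/
/-!
Fix `a ∈ A(N)`. Player `i` has no incentive to break away from `(a, z)` exactly when
`z i ≥ v_max(a,{i})`, since `v_max(a,{i})` is the largest ratio `v_u(b,{i}) / v_u(a,N)`.
So an imputation with action `a` exists iff these lower bounds can be met by shares summing
to `1`, i.e. iff `∑ i, v_max(a,{i}) ≤ 1`; the slack is then distributed evenly.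
-/

open Finset

theorem exists_sum_eq_and_forall_le_iff {ι K : Type*} [Fintype ι] [Nonempty ι] [Field K]
    [LinearOrder K] [IsStrictOrderedRing K] (m : ι → K) (s : K) :
    (∃ z : ι → K, ∑ i, z i = s ∧ ∀ i, m i ≤ z i) ↔ ∑ i, m i ≤ s := by
  constructor
  · rintro ⟨z, rfl, hmz⟩
    exact sum_le_sum fun i _ => hmz i
  · intro hm
    have hcard : (0 : K) < Fintype.card ι := by exact_mod_cast Fintype.card_pos
    set c := (s - ∑ i, m i) / Fintype.card ι
    refine ⟨fun i => m i + c, ?_, fun i => le_add_of_nonneg_right ?_⟩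
    · rw [sum_add_distrib, sum_const, card_univ, nsmul_eq_mul, mul_div_cancel₀ _ hcard.ne']
      ring
    · exact div_nonneg (sub_nonneg.mpr hm) hcard.le

theorem ciSup_ciSup_div_le_iff {β U : Type*} [Finite β] [Nonempty β] [Finite U] [Nonempty U]
    (f : β → U → ℝ) {g : U → ℝ} (hg : ∀ u, 0 < g u) (z : ℝ) :
    (⨆ u, (⨆ b, f b u) / g u) ≤ z ↔ ∀ b u, f b u ≤ g u * z := by
  rw [ciSup_le_iff (Set.finite_range _).bddAbove, forall_comm]
  refine forall_congr' fun u => ?_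
  simp only [div_le_iff₀ (hg u), ciSup_le_iff (Set.finite_range _).bddAbove, mul_comm z]

theorem stmt_4_general {ι α U : Type*} [Fintype ι] [Nonempty ι] [Fintype U] [Nonempty U]
    (A : Finset ι → Finset α) (hA : ∀ S, (A S).Nonempty)
    (v : α → Finset ι → U → ℝ)
    (hpos : ∀ a ∈ A Finset.univ, ∀ u : U, 0 < v a Finset.univ u) :
    (∃ a ∈ A Finset.univ, ∃ z : ι → ℝ, (∑ i, z i) = 1 ∧
        ∀ i : ι, ¬ ∃ b ∈ A {i}, ∃ u : U, v a Finset.univ u * z i < v b {i} u) ↔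
      (∃ a ∈ A Finset.univ,
        ∑ i : ι, (⨆ u : U, (⨆ b : A {i}, v (↑b) {i} u) / v a Finset.univ u) ≤ 1) := by
  have hne (i : ι) : Nonempty (A {i}) := (hA {i}).to_subtype
  refine exists_congr fun a => and_congr_right fun ha => ?_
  rw [← exists_sum_eq_and_forall_le_iff]
  refine exists_congr fun z => and_congr_right fun _ => forall_congr' fun i => ?_
  rw [ciSup_ciSup_div_le_iff _ (hpos a ha)]
  push Not
  exact ⟨fun h b u => h b b.2 u, fun h b hb u => h ⟨b, hb⟩ u⟩

/-- A robust cooperative game has an imputation iff there is an action `a ∈ A(N)` with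
`∑_i v_max(a,{i}) ≤ 1`, where `v_max(a,{i}) = max_u (max_{b ∈ A{i}} v_u(b,{i})) / v_u(a,N)`. -/
theorem stmt_4 {ι α U : Type*} [Fintype ι] [Nonempty ι] [Fintype U] [Nonempty U]
    (A : Finset ι → Finset α) (hA : ∀ S, (A S).Nonempty)
    (v : α → Finset ι → U → ℝ)
    (hind : ∀ i : ι, ∃ b ∈ A {i}, ∀ u : U, 0 ≤ v b {i} u)
    (hpos : ∀ a ∈ A Finset.univ, ∀ u : U, 0 < v a Finset.univ u) :
    (∃ a ∈ A Finset.univ, ∃ z : ι → ℝ, (∑ i, z i) = 1 ∧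
        ∀ i : ι, ¬ ∃ b ∈ A {i}, ∃ u : U, v a Finset.univ u * z i < v b {i} u) ↔
      (∃ a ∈ A Finset.univ,
        ∑ i : ι, (⨆ u : U, (⨆ b : A {i}, v (↑b) {i} u) / v a Finset.univ u) ≤ 1) :=
  stmt_4_general A hA v hpos
end

section
/- In a robust cooperative game, given an imputation (a, z), a coalition S ⊊ N has the incentive to break away if and only if Σ_{i∈S} z_i < v_max(a,S), where v_max(a,S) = max_{u∈U} (max_{α∈A(S)} v_u(α,S)) / v_u(a,N). -/
/-!
Summing `v_u(a,N) z_i < v_u(b,S) ẑ_i` over `S` gives `∑_S z_i < v_u(b,S) / v_u(a,N) ≤ v_max(a,S)`.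
Conversely, at a scenario `u` and action `b` attaining `v_max(a,S)`, the slack
`v_u(b,S) - v_u(a,N) ∑_S z_i` is spread evenly over `S` to build `ẑ`; dividing by `v_u(b,S)` is
legitimate because individual rationality makes `z` nonnegative, hence `v_u(b,S) > 0`.
-/

open Finset

section SumEqOne

variable {ι : Type*} {s : Finset ι} {x y : ι → ℝ} {d : ℝ}

theorem sum_lt_of_forall_lt_mul (hs : s.Nonempty) (hy : ∑ i ∈ s, y i = 1)
    (h : ∀ i ∈ s, x i < d * y i) : ∑ i ∈ s, x i < d :=
  calc ∑ i ∈ s, x i < ∑ i ∈ s, d * y i := sum_lt_sum_of_nonempty hs h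
    _ = d := by rw [← mul_sum, hy, mul_one]

theorem exists_sum_eq_one_forall_lt_mul (hs : s.Nonempty) (hd : d ≠ 0)
    (h : ∑ i ∈ s, x i < d) : ∃ y : ι → ℝ, ∑ i ∈ s, y i = 1 ∧ ∀ i ∈ s, x i < d * y i := by
  set ε := (d - ∑ i ∈ s, x i) / #s with hε_def
  have hε : 0 < ε := div_pos (sub_pos.2 h) (by exact_mod_cast hs.card_pos)
  refine ⟨fun i => (x i + ε) / d, ?_, fun i _ => ?_⟩
  · have hcard : (#s : ℝ) ≠ 0 := by exact_mod_cast hs.card_pos.ne'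
    rw [← sum_div, sum_add_distrib, sum_const, nsmul_eq_mul, div_eq_one_iff_eq hd, hε_def]
    field_simp
    ring
  · rw [mul_div_cancel₀ _ hd]
    linarith

end SumEqOne

section RobustGame

variable {ι α U : Type*} [Fintype ι] {A : Finset ι → Finset α} {v : α → Finset ι → U → ℝ}
  {a b : α} {S : Finset ι}

/-- The paper's `v_max(a, S)`. -/
noncomputable def vMax (A : Finset ι → Finset α) (v : α → Finset ι → U → ℝ) (a : α)
    (S : Finset ι) : ℝ :=
  ⨆ u : U, (⨆ b : A S, v (↑b) S u) / v a univ u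

theorem div_le_vMax [Finite U] {u : U} (hpos : 0 < v a univ u) (hb : b ∈ A S) :
    v b S u / v a univ u ≤ vMax A v a S := by
  have hb_le : v b S u ≤ ⨆ c : A S, v (↑c) S u :=
    le_ciSup (f := fun c : A S => v (↑c) S u) (Finite.bddAbove_range _) ⟨b, hb⟩
  calc v b S u / v a univ u ≤ (⨆ c : A S, v (↑c) S u) / v a univ u := by gcongr
    _ ≤ vMax A v a S :=
      le_ciSup (f := fun u : U => (⨆ c : A S, v (↑c) S u) / v a univ u) (Finite.bddAbove_range _) u

theorem exists_div_eq_vMax [Finite U] [Nonempty U] (hA : (A S).Nonempty) :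
    ∃ u : U, ∃ b ∈ A S, vMax A v a S = v b S u / v a univ u := by
  have := hA.to_subtype
  obtain ⟨u, hu⟩ := exists_eq_ciSup_of_finite
    (f := fun u : U => (⨆ c : A S, v (↑c) S u) / v a univ u)
  obtain ⟨b, hb⟩ := exists_eq_ciSup_of_finite (f := fun c : A S => v (↑c) S u)
  exact ⟨u, b, b.2, by rw [vMax, ← hu, ← hb]⟩

theorem vMax_nonneg [Finite U] [Nonempty U] (hb : b ∈ A S) (hb_nonneg : ∀ u, 0 ≤ v b S u)
    (hpos : ∀ u, 0 < v a univ u) : 0 ≤ vMax A v a S :=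
  let u := Classical.arbitrary U
  (div_nonneg (hb_nonneg u) (hpos u).le).trans (div_le_vMax (hpos u) hb)

end RobustGame

theorem stmt_5_general {ι α U : Type*} [Fintype ι] [Fintype U] [Nonempty U]
    (A : Finset ι → Finset α) (hA : ∀ S, (A S).Nonempty)
    (v : α → Finset ι → U → ℝ)
    (hind : ∀ i : ι, ∃ b ∈ A {i}, ∀ u : U, 0 ≤ v b {i} u)
    (hpos : ∀ a ∈ A Finset.univ, ∀ u : U, 0 < v a Finset.univ u)
    (a : α) (ha : a ∈ A Finset.univ)
    (z : ι → ℝ)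
    (himp : ∀ i : ι, (⨆ u : U, (⨆ b : A {i}, v (↑b) {i} u) / v a Finset.univ u) ≤ z i)
    (S : Finset ι) (hSne : S.Nonempty) :
    (∃ b ∈ A S, ∃ zh : ι → ℝ, (∑ i ∈ S, zh i) = 1 ∧
        ∃ u : U, ∀ i ∈ S, v a Finset.univ u * z i < v b S u * zh i) ↔
      (∑ i ∈ S, z i) < ⨆ u : U, (⨆ b : A S, v (↑b) S u) / v a Finset.univ u := by
  change _ ↔ ∑ i ∈ S, z i < vMax A v a S
  constructor
  · rintro ⟨b, hb, zh, hzh, u, hu⟩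
    have hvN := hpos a ha u
    have hsum : v a univ u * ∑ i ∈ S, z i < v b S u := by
      rw [mul_sum]
      exact sum_lt_of_forall_lt_mul hSne hzh hu
    exact ((lt_div_iff₀' hvN).2 hsum).trans_le (div_le_vMax hvN hb)
  · intro hlt
    have hz_nonneg (i : ι) : 0 ≤ z i := by
      obtain ⟨b, hb, hb_nonneg⟩ := hind i
      exact (vMax_nonneg hb hb_nonneg (hpos a ha)).trans (himp i)
    obtain ⟨u, b, hb, hmax⟩ := exists_div_eq_vMax (a := a) (v := v) (hA S)
    have hvN := hpos a ha u
    have hsum : ∑ i ∈ S, v a univ u * z i < v b S u := by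
      rw [← mul_sum, ← lt_div_iff₀' hvN, ← hmax]
      exact hlt
    have hvb : 0 < v b S u :=
      (sum_nonneg fun i _ => mul_nonneg hvN.le (hz_nonneg i)).trans_lt hsum
    obtain ⟨zh, hzh, hlt_zh⟩ := exists_sum_eq_one_forall_lt_mul hSne hvb.ne' hsum
    exact ⟨b, hb, zh, hzh, u, hlt_zh⟩

/-- Coalition break-away lemma for robust cooperative games: given an imputation `(a, z)`,
a coalition `S ⊊ N` has the incentive to break away iff `∑_{i ∈ S} z i < v_max(a, S)`. -/
theorem stmt_5 {ι α U : Type*} [Fintype ι] [Nonempty ι] [Fintype U] [Nonempty U]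
    (A : Finset ι → Finset α) (hA : ∀ S, (A S).Nonempty)
    (v : α → Finset ι → U → ℝ)
    (hind : ∀ i : ι, ∃ b ∈ A {i}, ∀ u : U, 0 ≤ v b {i} u)
    (hpos : ∀ a ∈ A Finset.univ, ∀ u : U, 0 < v a Finset.univ u)
    (a : α) (ha : a ∈ A Finset.univ)
    (z : ι → ℝ) (hz : ∑ i, z i = 1)
    (himp : ∀ i : ι, (⨆ u : U, (⨆ b : A {i}, v (↑b) {i} u) / v a Finset.univ u) ≤ z i)
    (S : Finset ι) (hSne : S.Nonempty) (hS : S ⊂ Finset.univ) :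
    (∃ b ∈ A S, ∃ zh : ι → ℝ, (∑ i ∈ S, zh i) = 1 ∧
        ∃ u : U, ∀ i ∈ S, v a Finset.univ u * z i < v b S u * zh i) ↔
      (∑ i ∈ S, z i) < ⨆ u : U, (⨆ b : A S, v (↑b) S u) / v a Finset.univ u :=
  stmt_5_general A hA v hind hpos a ha z himp S hSne
end

section
/- A robust cooperative game has a non-empty core if and only if it is balanced, i.e., there exists an action a ∈ A(N) such that for every balanced map μ: 2^N\{∅} → [0,∞) with Σ_{S⊊N} μ(S)·e_S = e_N, one has Σ_{S⊊N} μ(S)·v_max(a,S) ≤ 1. -/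
/-!
For a fixed action `a` the core condition is a finite system of linear inequalities in the
payoff vector `z`, with right-hand sides `v_max(a, S)`. By Farkas' lemma it is solvable unless
some nonnegative combination of the inequalities is contradictory, and after normalisation such a
combination is a balanced map `μ` with `∑ μ(S) v_max(a, S) > 1` (Bondareva–Shapley). Farkas'
lemma comes from separating a point from a finitely generated cone, which is closed by
Carathéodory's theorem for cones.
-/

open Finset Matrix

section Caratheodory

variable {κ E : Type*} [Fintype κ] [AddCommGroup E] [Module ℝ E]

theorem exists_pos_of_not_linearIndepOn {g : κ → E} {s : Set κ} (h : ¬LinearIndepOn ℝ g s) :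
    ∃ D : κ → ℝ, ∑ j, D j • g j = 0 ∧ Function.support D ⊆ s ∧ ∃ j, 0 < D j := by
  obtain ⟨f, hfs, hf0, hf⟩ := linearDepOn_iff'.mp h
  rw [Finsupp.linearCombination_apply, Finsupp.sum_fintype _ _ (by simp)] at hf0
  have hsupp : Function.support f ⊆ s := by simpa using (Finsupp.mem_supported ℝ f).mp hfs
  obtain ⟨j, hj⟩ := DFunLike.ne_iff.mp hf
  rcases (show f j ≠ 0 from hj).lt_or_gt with hneg | hpos
  · exact ⟨-f, by simp [hf0], by simpa using hsupp, j, by simpa using hneg⟩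
  · exact ⟨f, hf0, hsupp, j, hpos⟩

theorem exists_nonneg_sub_smul_apply_eq_zero {t D : κ → ℝ} (ht : 0 ≤ t) (hD : ∃ j, 0 < D j) :
    ∃ c : ℝ, 0 ≤ t - c • D ∧ ∃ j, D j ≠ 0 ∧ (t - c • D) j = 0 := by
  obtain ⟨j₁, hj₁⟩ := hD
  -- ratio test: the step is the least `t j / D j` over `D j > 0`
  obtain ⟨j₀, hj₀, hmin⟩ := ({j | 0 < D j} : Finset κ).exists_min_image (fun j => t j / D j)
    ⟨j₁, (mem_filter_univ j₁).mpr hj₁⟩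
  rw [mem_filter_univ] at hj₀
  refine ⟨t j₀ / D j₀, fun j => ?_, j₀, hj₀.ne', by simp [div_mul_cancel₀ _ hj₀.ne']⟩
  simp only [Pi.zero_apply, Pi.sub_apply, Pi.smul_apply, smul_eq_mul, sub_nonneg]
  rcases lt_or_ge 0 (D j) with hDj | hDj
  · exact (le_div_iff₀ hDj).mp (hmin j ((mem_filter_univ j).mpr hDj))
  · exact (mul_nonpos_of_nonneg_of_nonpos (div_nonneg (ht j₀) hj₀.le) hDj).trans (ht j)

theorem exists_nonneg_support_ssubset {g : κ → E} {t : κ → ℝ} (ht : 0 ≤ t)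
    (hdep : ¬LinearIndepOn ℝ g (Function.support t)) :
    ∃ t' : κ → ℝ, 0 ≤ t' ∧ ∑ j, t' j • g j = ∑ j, t j • g j ∧
      Function.support t' ⊂ Function.support t := by
  obtain ⟨D, hD0, hDt, hDpos⟩ := exists_pos_of_not_linearIndepOn hdep
  obtain ⟨c, hc, j₀, hj₀, htj₀⟩ := exists_nonneg_sub_smul_apply_eq_zero ht hDpos
  refine ⟨t - c • D, hc, ?_, ?_⟩
  · simp [sub_smul, sum_sub_distrib, mul_smul, ← smul_sum, hD0]
  · refine (Set.ssubset_iff_of_subset fun j hj => ?_).mpr ⟨j₀, hDt hj₀, fun h => h htj₀⟩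
    by_contra htj
    have hDj : D j = 0 := Function.notMem_support.mp fun h => htj (hDt h)
    simp [Function.notMem_support.mp htj, hDj] at hj

theorem exists_nonneg_linearIndepOn_support (g : κ → E) {t : κ → ℝ} (ht : 0 ≤ t) :
    ∃ t' : κ → ℝ, 0 ≤ t' ∧ ∑ j, t' j • g j = ∑ j, t j • g j ∧
      LinearIndepOn ℝ g (Function.support t') := by
  induction hn : (Function.support t).ncard using Nat.strong_induction_on generalizing t with
  | _ n ih =>
    by_cases hli : LinearIndepOn ℝ g (Function.support t)
    · exact ⟨t, ht, rfl, hli⟩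
    obtain ⟨t₁, ht₁, hsum₁, hsub⟩ := exists_nonneg_support_ssubset ht hli
    obtain ⟨t', ht', hsum', hli'⟩ := ih _ (hn ▸ Set.ncard_lt_ncard hsub) ht₁ rfl
    exact ⟨t', ht', hsum'.trans hsum₁, hli'⟩

end Caratheodory

namespace PointedCone

theorem mem_hull_range_iff {κ E : Type*} [Fintype κ] [AddCommGroup E] [Module ℝ E] {g : κ → E}
    {x : E} : x ∈ hull ℝ (Set.range g) ↔ ∃ t : κ → ℝ, 0 ≤ t ∧ ∑ j, t j • g j = x := by
  rw [Submodule.mem_span_range_iff_exists_fun]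
  constructor
  · rintro ⟨c, rfl⟩
    exact ⟨fun j => c j, fun j => (c j).2, by simp⟩
  · rintro ⟨t, ht, rfl⟩
    exact ⟨fun j => ⟨t j, ht j⟩, by simp⟩

variable {E : Type*} [AddCommGroup E] [Module ℝ E] [TopologicalSpace E] [IsTopologicalAddGroup E]
  [ContinuousSMul ℝ E] [T2Space E]

theorem isClosed_hull_range_of_linearIndependent {κ : Type*} [Fintype κ] {g : κ → E}
    (hg : LinearIndependent ℝ g) : IsClosed (hull ℝ (Set.range g) : Set E) := by
  have hset : (hull ℝ (Set.range g) : Set E) = Fintype.linearCombination ℝ g '' Set.Ici 0 := by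
    ext x
    simp [mem_hull_range_iff, Fintype.linearCombination_apply]
  rw [hset]
  exact (LinearMap.isClosedEmbedding_of_injective
    (LinearMap.ker_eq_bot.mpr hg.fintypeLinearCombination_injective)).isClosedMap _ isClosed_Ici

theorem isClosed_hull_range {κ : Type*} [Finite κ] (g : κ → E) :
    IsClosed (hull ℝ (Set.range g) : Set E) := by
  classical
  have := Fintype.ofFinite κ
  have hunion : (hull ℝ (Set.range g) : Set E) =
      ⋃ (s : Set κ) (_ : LinearIndepOn ℝ g s), (hull ℝ (g '' s) : Set E) := by
    refine subset_antisymm (fun x hx => ?_) (Set.iUnion₂_subset fun s _ =>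
      Submodule.span_mono (Set.image_subset_range g s))
    obtain ⟨t, ht, rfl⟩ := mem_hull_range_iff.mp hx
    obtain ⟨t', ht', hsum, hli⟩ := exists_nonneg_linearIndepOn_support g ht
    refine Set.mem_iUnion₂.mpr ⟨_, hli, hsum ▸ Submodule.sum_mem _ fun j _ => ?_⟩
    by_cases hj : t' j = 0
    · simp [hj]
    · exact smul_mem _ (ht' j) (subset_hull ⟨j, hj, rfl⟩)
  rw [hunion]
  refine isClosed_iUnion_of_finite fun s => isClosed_iUnion_of_finite fun hs => ?_
  rw [Set.image_eq_range]
  exact isClosed_hull_range_of_linearIndependent hs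

end PointedCone

namespace Matrix

variable {m n : Type*} [Fintype m] [Fintype n]

theorem exists_le_mulVec_of_forall_vecMul_eq_zero (W : Matrix m n ℝ) (c : m → ℝ)
    (h : ∀ μ : m → ℝ, 0 ≤ μ → μ ᵥ* W = 0 → μ ⬝ᵥ c ≤ 0) : ∃ z : n → ℝ, c ≤ W *ᵥ z := by
  classical
  -- `c` lies in the cone spanned by `G` iff `c = W *ᵥ z - s` for some `z` and some `s ≥ 0`
  let G : n ⊕ n ⊕ m → m → ℝ :=
    Sum.elim (fun i => Wᵀ i) (Sum.elim (fun i => -Wᵀ i) fun k => -Pi.single k 1)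
  by_cases hc : c ∈ PointedCone.hull ℝ (Set.range G)
  · obtain ⟨t, ht, htc⟩ := PointedCone.mem_hull_range_iff.mp hc
    refine ⟨fun i => t (.inl i) - t (.inr (.inl i)), fun k => ?_⟩
    have hck : c k = (W *ᵥ fun i => t (.inl i) - t (.inr (.inl i))) k - t (.inr (.inr k)) := by
      simp [← htc, G, Fintype.sum_sum_type, mulVec, dotProduct, Pi.single_apply, mul_sub,
        sum_sub_distrib, mul_comm (t _)]
      ring
    linarith [show (0 : ℝ) ≤ t (.inr (.inr k)) from ht _]
  · let C : ProperCone ℝ (m → ℝ) :=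
      { toSubmodule := PointedCone.hull ℝ (Set.range G)
        isClosed' := PointedCone.isClosed_hull_range G }
    obtain ⟨f, hfC, hfc⟩ := C.hyperplane_separation_point hc
    have hfG : ∀ j, 0 ≤ f (G j) := fun j => hfC _ (PointedCone.subset_hull ⟨j, rfl⟩)
    let y : m → ℝ := fun k => f fun j => if k = j then 1 else 0
    have hfy : ∀ x, f x = x ⬝ᵥ y := fun x => by
      simpa [dotProduct] using LinearMap.pi_apply_eq_sum_univ f.toLinearMap x
    refine absurd (h (-y) (fun k => ?_) (funext fun i => ?_)) ?_
    · simpa [G, hfy, Pi.single_apply, dotProduct, eq_comm] using hfG (.inr (.inr k))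
    · have h₁ := hfG (.inl i)
      have h₂ := hfG (.inr (.inl i))
      simp only [G, Sum.elim_inl, Sum.elim_inr, map_neg, neg_nonneg] at h₁ h₂
      have hWi : f (Wᵀ i) = 0 := le_antisymm h₂ h₁
      rw [hfy, dotProduct_comm] at hWi
      simp only [Pi.zero_apply, neg_vecMul, Pi.neg_apply, neg_eq_zero]
      exact hWi
    · rw [neg_dotProduct, dotProduct_comm, ← hfy]
      linarith

end Matrix

section Balanced

variable {ι : Type*} [DecidableEq ι] {F : Finset (Finset ι)} {w : Finset ι → ℝ} {b : ℝ}

theorem sum_mul_le_sum_mul_sum_of_le_sum [Fintype ι] (μ : Finset ι → ℝ) (hμ : ∀ S, 0 ≤ μ S)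
    {z : ι → ℝ} (hz : ∀ S ∈ F, w S ≤ ∑ i ∈ S, z i) :
    ∑ S ∈ F, μ S * w S ≤ ∑ i, (∑ S ∈ F with i ∈ S, μ S) * z i := calc
  ∑ S ∈ F, μ S * w S ≤ ∑ S ∈ F, μ S * ∑ i ∈ S, z i :=
    sum_le_sum fun S hS => mul_le_mul_of_nonneg_left (hz S hS) (hμ S)
  _ = ∑ i, (∑ S ∈ F with i ∈ S, μ S) * z i := by
    simp_rw [mul_sum, sum_mul]
    exact sum_comm' fun S i => by simp [and_comm]

theorem sum_mul_le_mul_of_forall_balanced (hF : ∀ S ∈ F, S.Nonempty)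
    (hbal : ∀ μ : Finset ι → ℝ, (∀ S, 0 ≤ μ S) → (∀ i, ∑ S ∈ F with i ∈ S, μ S = 1) →
      ∑ S ∈ F, μ S * w S ≤ b)
    {ν : Finset ι → ℝ} (hν : ∀ S, 0 ≤ ν S) {l : ℝ} (hl : 0 ≤ l)
    (hνl : ∀ i, ∑ S ∈ F with i ∈ S, ν S = l) :
    ∑ S ∈ F, ν S * w S ≤ l * b := by
  rcases hl.eq_or_lt with rfl | hl
  · have hν0 : ∀ S ∈ F, ν S = 0 := fun S hS => by
      obtain ⟨i, hi⟩ := hF S hS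
      exact (sum_eq_zero_iff_of_nonneg fun T _ => hν T).mp (hνl i) S (mem_filter.mpr ⟨hS, hi⟩)
    rw [sum_eq_zero fun S hS => by rw [hν0 S hS, zero_mul], zero_mul]
  · have := hbal (fun S => ν S / l) (fun S => div_nonneg (hν S) hl.le)
      (fun i => by rw [← sum_div, hνl i, div_self hl.ne'])
    simp_rw [div_mul_eq_mul_div, ← sum_div, div_le_iff₀ hl] at this
    linarith

theorem exists_le_sum_eq_of_sum_le [Fintype ι] [Nonempty ι] {z : ι → ℝ} (h : ∑ i, z i ≤ b) :
    ∃ z' : ι → ℝ, z ≤ z' ∧ ∑ i, z' i = b := by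
  let i₀ := Classical.arbitrary ι
  refine ⟨z + Pi.single i₀ (b - ∑ i, z i), le_add_of_nonneg_right ?_, by simp [sum_add_distrib]⟩
  exact Pi.single_nonneg.mpr (sub_nonneg.mpr h)

theorem bondareva_shapley [Fintype ι] [Nonempty ι] (hF : ∀ S ∈ F, S.Nonempty) :
    (∃ z : ι → ℝ, ∑ i, z i = b ∧ ∀ S ∈ F, w S ≤ ∑ i ∈ S, z i) ↔
      ∀ μ : Finset ι → ℝ, (∀ S, 0 ≤ μ S) → (∀ i, ∑ S ∈ F with i ∈ S, μ S = 1) →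
        ∑ S ∈ F, μ S * w S ≤ b := by
  constructor
  · rintro ⟨z, rfl, hz⟩ μ hμ hbal
    simpa [hbal] using sum_mul_le_sum_mul_sum_of_le_sum μ hμ hz
  · intro hbal
    -- row `none` encodes `∑ i, z i ≤ b`; rows of coalitions outside `F` read `0 ≤ 0`
    let W : Matrix (Option (Finset ι)) ι ℝ :=
      Matrix.of fun k i => k.elim (-1) fun S => if S ∈ F ∧ i ∈ S then 1 else 0
    let c : Option (Finset ι) → ℝ := fun k => k.elim (-b) fun S => if S ∈ F then w S else 0
    obtain ⟨z, hz⟩ := W.exists_le_mulVec_of_forall_vecMul_eq_zero c fun μ hμ hμW => by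
      have hrow : ∀ i, ∑ S ∈ F with i ∈ S, μ (some S) = μ none := fun i => by
        have := congrFun hμW i
        simp [W, vecMul, dotProduct, Fintype.sum_option, ite_and, sum_ite_mem] at this
        rw [sum_filter]
        linarith
      have := sum_mul_le_mul_of_forall_balanced hF hbal (fun S => hμ (some S)) (hμ none) hrow
      simpa [c, dotProduct, Fintype.sum_option] using this
    obtain ⟨z', hzz', hz'⟩ := exists_le_sum_eq_of_sum_le (z := z) (b := b) (by
      simpa [W, c, mulVec, dotProduct] using hz none)
    refine ⟨z', hz', fun S hS => ?_⟩
    have := hz (some S)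
    simp [W, c, mulVec, dotProduct, hS] at this
    exact this.trans (sum_le_sum fun i _ => hzz' i)

end Balanced

open Classical in
theorem stmt_6_general {ι α U : Type*} [Fintype ι] [Nonempty ι]
    (A : Finset ι → Finset α)
    (v : α → Finset ι → U → ℝ) :
    (∃ a ∈ A Finset.univ, ∃ z : ι → ℝ, (∑ i, z i) = 1 ∧
        ∀ S : Finset ι, S.Nonempty → S ⊂ Finset.univ →
          (⨆ u : U, (⨆ b : A S, v (↑b) S u) / v a Finset.univ u) ≤ ∑ i ∈ S, z i) ↔
      (∃ a ∈ A Finset.univ, ∀ μ : Finset ι → ℝ, (∀ S, 0 ≤ μ S) →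
        (∀ i : ι,
          ∑ S ∈ Finset.univ.filter (fun S : Finset ι => i ∈ S ∧ S ⊂ Finset.univ), μ S = 1) →
        ∑ S ∈ Finset.univ.filter (fun S : Finset ι => S.Nonempty ∧ S ⊂ Finset.univ),
          μ S * (⨆ u : U, (⨆ b : A S, v (↑b) S u) / v a Finset.univ u) ≤ 1) := by
  set F := univ.filter fun S : Finset ι => S.Nonempty ∧ S ⊂ univ
  have hF : ∀ S ∈ F, S.Nonempty := fun S hS => (mem_filter.mp hS).2.1
  have hcoalitions : ∀ i, univ.filter (fun S : Finset ι => i ∈ S ∧ S ⊂ univ) = F.filter (i ∈ ·) :=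
    fun i => by ext S; simpa [F, and_comm] using fun hi _ => ⟨i, hi⟩
  refine exists_congr fun a => and_congr_right fun _ => ?_
  simp only [hcoalitions, ← bondareva_shapley hF]
  simp [F]

open Classical in
/-- A robust cooperative game has a non-empty core iff it is balanced: there is an action
`a ∈ A(N)` such that every balanced map `μ` (with `∑_{S ⊊ N} μ(S)·e_S = e_N`) satisfies
`∑_{S ⊊ N} μ(S)·v_max(a,S) ≤ 1`. -/
theorem stmt_6 {ι α U : Type*} [Fintype ι] [Nonempty ι] [Fintype U] [Nonempty U]
    (A : Finset ι → Finset α) (hA : ∀ S, (A S).Nonempty)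
    (v : α → Finset ι → U → ℝ)
    (hind : ∀ i : ι, ∃ b ∈ A {i}, ∀ u : U, 0 ≤ v b {i} u)
    (hpos : ∀ a ∈ A Finset.univ, ∀ u : U, 0 < v a Finset.univ u) :
    (∃ a ∈ A Finset.univ, ∃ z : ι → ℝ, (∑ i, z i) = 1 ∧
        ∀ S : Finset ι, S.Nonempty → S ⊂ Finset.univ →
          (⨆ u : U, (⨆ b : A S, v (↑b) S u) / v a Finset.univ u) ≤ ∑ i ∈ S, z i) ↔
      (∃ a ∈ A Finset.univ, ∀ μ : Finset ι → ℝ, (∀ S, 0 ≤ μ S) →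
        (∀ i : ι,
          ∑ S ∈ Finset.univ.filter (fun S : Finset ι => i ∈ S ∧ S ⊂ Finset.univ), μ S = 1) →
        ∑ S ∈ Finset.univ.filter (fun S : Finset ι => S.Nonempty ∧ S ⊂ Finset.univ),
          μ S * (⨆ u : U, (⨆ b : A S, v (↑b) S u) / v a Finset.univ u) ≤ 1) :=
  stmt_6_general A v
end

section
/- For any coalition S ⊆ N, the worst-case optimal order quantity satisfies y*_wc(S) = Σ_{r=1}^R y*(S_r), where S_r = S ∩ N_r and y*(S_r) is the (p−c)/p-quantile of the known distribution of d̃(S_r); moreover the worst-case optimal profit decomposes as v_wc(S) = Σ_{r=1}^R v̄(S_r). -/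
open MeasureTheory

/-- The Fréchet class of joint demand distributions on `ι → ℝ` consistent with the
prescribed block marginals `P r` on the blocks `{i // ρ i = r}`. -/
def frechet {ι : Type*} [Fintype ι] {R : ℕ} (ρ : ι → Fin R)
    (P : (r : Fin R) → Measure ({i : ι // ρ i = r} → ℝ)) : Set (Measure (ι → ℝ)) :=
  {μ | IsProbabilityMeasure μ ∧
    ∀ r : Fin R, μ.map (fun d (i : {i : ι // ρ i = r}) => d i.1) = P r}

/-- Worst-case objective for coalition `S`:
`g(y) = (p-c)·y - p · max_{P ∈ P(P_1,...,P_R)} E_P[(y - d̃(S))⁺]`. -/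
noncomputable def gwc {ι : Type*} [Fintype ι] {R : ℕ} (ρ : ι → Fin R)
    (P : (r : Fin R) → Measure ({i : ι // ρ i = r} → ℝ))
    (p c : ℝ) (S : Finset ι) (y : ℝ) : ℝ :=
  (p - c) * y - p * ⨆ μ : frechet ρ P, ∫ d, max (y - ∑ i ∈ S, d i) 0 ∂μ.1

/-- Deterministic newsvendor objective for the block coalition `S_r = S ∩ N_r`
under the known marginal `P r`. -/
noncomputable def fdet {ι : Type*} [Fintype ι] [DecidableEq ι] {R : ℕ} (ρ : ι → Fin R)
    (P : (r : Fin R) → Measure ({i : ι // ρ i = r} → ℝ))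
    (p c : ℝ) (S : Finset ι) (r : Fin R) (x : ℝ) : ℝ :=
  (p - c) * x - p * ∫ w, max (x -
    ∑ i ∈ Finset.univ.filter (fun i : {i : ι // ρ i = r} => i.1 ∈ S), w i) 0 ∂(P r)

/-! Put `q = (p - c) / p` and `Y = ∑ r, y*(S_r)`. Since
`(Y - ∑ r, d̃(S_r))⁺ ≤ ∑ r, (y*(S_r) - d̃(S_r))⁺` pointwise, no law in the Fréchet class makes the
expected leftover at `Y` exceed the sum of the block leftovers, whence `v_wc(S) ≥ ∑ r, v̄(S_r)`.

Conversely, optimality of `y*(S_r)` makes it a `q`-quantile of `d̃(S_r)`, so `P_r` splits as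
`q • A_r + (1 - q) • B_r` with `d̃(S_r) ≤ y*(S_r)` under `A_r` and `d̃(S_r) ≥ y*(S_r)` under
`B_r` (an atom at the quantile is shared between the two). The law
`q • ⊗ r, A_r + (1 - q) • ⊗ r, B_r` lies in the Fréchet class and puts all blocks on the same
side of their quantiles at once. Under it the leftover at `Y` is exactly the sum of the block
leftovers, and the coalition's newsvendor profit at any `y` is at most its value at `Y`, which is
`∑ r, v̄(S_r)`. -/

open Set Filter Topology ProbabilityTheory
open scoped ENNReal

section PositivePart

variable {α : Type*} [MeasurableSpace α] {μ : Measure α} {f : α → ℝ}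

lemma integrable_max_sub_of_ae_nonneg [IsFiniteMeasure μ] (hf : AEStronglyMeasurable f μ)
    (h0 : ∀ᵐ x ∂μ, 0 ≤ f x) (a : ℝ) : Integrable (fun x => max (a - f x) 0) μ := by
  refine (integrable_const (max a 0)).mono'
    ((aestronglyMeasurable_const.sub hf).sup aestronglyMeasurable_const) ?_
  filter_upwards [h0] with x hx
  rw [Real.norm_of_nonneg (le_max_right _ _)]
  exact max_le_max (by linarith) le_rfl

lemma integral_max_sub_le_of_ae_nonneg [IsProbabilityMeasure μ] (h0 : ∀ᵐ x ∂μ, 0 ≤ f x)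
    (a : ℝ) : ∫ x, max (a - f x) 0 ∂μ ≤ max a 0 := by
  refine (integral_mono_of_nonneg (.of_forall fun x => le_max_right _ _)
    (integrable_const (max a 0)) ?_).trans_eq (by simp)
  filter_upwards [h0] with x hx
  exact max_le_max (by linarith) le_rfl

lemma integral_smul_add_smul_measure {ν : Measure α} (hμ : Integrable f μ)
    (hν : Integrable f ν) {w₁ w₂ : ℝ≥0∞} (h₁ : w₁ ≠ ⊤) (h₂ : w₂ ≠ ⊤) :
    ∫ x, f x ∂(w₁ • μ + w₂ • ν) = w₁.toReal * ∫ x, f x ∂μ + w₂.toReal * ∫ x, f x ∂ν := by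
  rw [integral_add_measure (hμ.smul_measure h₁) (hν.smul_measure h₂), integral_smul_measure,
    integral_smul_measure, smul_eq_mul, smul_eq_mul]

end PositivePart

lemma max_sum_sub_sum_le {κ : Type*} (s : Finset κ) (a t : κ → ℝ) :
    max (∑ r ∈ s, a r - ∑ r ∈ s, t r) 0 ≤ ∑ r ∈ s, max (a r - t r) 0 := by
  rw [← Finset.sum_sub_distrib]
  exact max_le (Finset.sum_le_sum fun r _ => le_max_left _ _)
    (Finset.sum_nonneg fun r _ => le_max_right _ _)

lemma sub_sum_add_sum_max_le {κ : Type*} (s : Finset κ) {a t : κ → ℝ}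
    (h : ∀ r ∈ s, t r ≤ a r) (y : ℝ) :
    y - ∑ r ∈ s, a r + ∑ r ∈ s, max (a r - t r) 0 ≤ max (y - ∑ r ∈ s, t r) 0 := by
  rw [Finset.sum_congr rfl fun r hr => max_eq_left (sub_nonneg.2 (h r hr)),
    Finset.sum_sub_distrib]
  exact le_of_eq_of_le (by ring) (le_max_left _ _)

section Newsvendor

variable (ν : Measure ℝ) [IsFiniteMeasure ν] {a b : ℝ}

lemma integral_max_sub_sub_le (hint : ∀ x, Integrable (fun t => max (x - t) 0) ν) (hab : a ≤ b) :
    ∫ t, max (b - t) 0 ∂ν - ∫ t, max (a - t) 0 ∂ν ≤ (b - a) * ν.real (Iic b) := by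
  rw [← integral_sub (hint b) (hint a), mul_comm, ← smul_eq_mul,
    ← integral_indicator_const _ measurableSet_Iic]
  refine integral_mono ((hint b).sub (hint a))
    ((integrable_const _).indicator measurableSet_Iic) fun t => ?_
  by_cases ht : t ≤ b
  · rw [indicator_of_mem (mem_Iic.2 ht)]
    rcases le_total t a with hta | hta
    · rw [max_eq_left (by linarith), max_eq_left (by linarith)]; linarith
    · rw [max_eq_left (by linarith), max_eq_right (by linarith)]; linarith
  · rw [indicator_of_notMem (by simpa using ht), max_eq_right (by linarith),
      max_eq_right (by linarith)]; simp

lemma mul_measureReal_Iic_le_integral_max_sub_sub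
    (hint : ∀ x, Integrable (fun t => max (x - t) 0) ν) (hab : a ≤ b) :
    (b - a) * ν.real (Iic a) ≤ ∫ t, max (b - t) 0 ∂ν - ∫ t, max (a - t) 0 ∂ν := by
  rw [← integral_sub (hint b) (hint a), mul_comm, ← smul_eq_mul,
    ← integral_indicator_const _ measurableSet_Iic]
  refine integral_mono ((integrable_const _).indicator measurableSet_Iic)
    ((hint b).sub (hint a)) fun t => ?_
  by_cases ht : t ≤ a
  · rw [indicator_of_mem (mem_Iic.2 ht), max_eq_left (by linarith), max_eq_left (by linarith)]
    simp
  · rw [indicator_of_notMem (by simpa using ht), max_eq_right (by linarith : a - t ≤ 0)]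
    simp

end Newsvendor

section Quantile

variable (ν : Measure ℝ) [IsProbabilityMeasure ν] {q y : ℝ}

lemma le_measure_Iic_of_isMaxOn (h0 : ∀ᵐ t ∂ν, 0 ≤ t)
    (hmax : IsMaxOn (fun x => q * x - ∫ t, max (x - t) 0 ∂ν) (Ici 0) y) (hy : 0 ≤ y) :
    ENNReal.ofReal q ≤ ν (Iic y) := by
  have hint x := integrable_max_sub_of_ae_nonneg aestronglyMeasurable_id h0 x
  have hright : ∀ x ∈ Ioi y, q ≤ cdf ν x := fun x (hx : y < x) => by
    have hopt : q * x - ∫ t, max (x - t) 0 ∂ν ≤ q * y - ∫ t, max (y - t) 0 ∂ν :=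
      hmax (mem_Ici.2 (hy.trans hx.le))
    have hdiff := integral_max_sub_sub_le ν hint hx.le
    rw [cdf_eq_real]
    nlinarith
  have hlim : Tendsto (cdf ν) (𝓝[>] y) (𝓝 (cdf ν y)) :=
    ((cdf ν).right_continuous y).mono Ioi_subset_Ici_self
  rw [← ofReal_cdf]
  exact ENNReal.ofReal_le_ofReal (ge_of_tendsto hlim (eventually_nhdsWithin_of_forall hright))

lemma measure_Iio_le_of_isMaxOn (h0 : ∀ᵐ t ∂ν, 0 ≤ t)
    (hmax : IsMaxOn (fun x => q * x - ∫ t, max (x - t) 0 ∂ν) (Ici 0) y) (hq : 0 ≤ q) :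
    ν (Iio y) ≤ ENNReal.ofReal q := by
  have hint x := integrable_max_sub_of_ae_nonneg aestronglyMeasurable_id h0 x
  have hleft : ∀ x ∈ Iio y, cdf ν x ≤ q := fun x (hx : x < y) => by
    rw [cdf_eq_real]
    rcases lt_or_ge x 0 with hx0 | hx0
    · have hnull : ν (Iic x) = 0 :=
        measure_mono_null (Iic_subset_Iio.2 hx0) (by rw [← compl_Ici]; exact mem_ae_iff.1 h0)
      simp [Measure.real, hnull, hq]
    · have hopt : q * x - ∫ t, max (x - t) 0 ∂ν ≤ q * y - ∫ t, max (y - t) 0 ∂ν :=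
        hmax (mem_Ici.2 hx0)
      have hdiff := mul_measureReal_Iic_le_integral_max_sub_sub ν hint hx.le
      nlinarith
  have hlim := (monotone_cdf ν).tendsto_leftLim y
  rw [← measure_cdf ν, StieltjesFunction.measure_Iio _ (tendsto_cdf_atBot ν), sub_zero]
  exact ENNReal.ofReal_le_ofReal (le_of_tendsto hlim (eventually_nhdsWithin_of_forall hleft))

end Quantile

lemma measure_lt_le_and_le_measure_le_of_isMaxOn {X : Type*} [MeasurableSpace X] (ν : Measure X)
    [IsProbabilityMeasure ν] {f : X → ℝ} (hf : Measurable f) (h0 : ∀ᵐ v ∂ν, 0 ≤ f v) {q y : ℝ}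
    (hq : 0 ≤ q) (hy : 0 ≤ y)
    (hmax : IsMaxOn (fun x => q * x - ∫ v, max (x - f v) 0 ∂ν) (Ici 0) y) :
    ν {v | f v < y} ≤ ENNReal.ofReal q ∧ ENNReal.ofReal q ≤ ν {v | f v ≤ y} := by
  have := Measure.isProbabilityMeasure_map (μ := ν) hf.aemeasurable
  have h0' : ∀ᵐ t ∂ν.map f, 0 ≤ t := (ae_map_iff hf.aemeasurable measurableSet_Ici).2 h0
  have hI x : ∫ t, max (x - t) 0 ∂ν.map f = ∫ v, max (x - f v) 0 ∂ν :=
    integral_map hf.aemeasurable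
      ((measurable_const.sub measurable_id).max measurable_const).aestronglyMeasurable
  have hmax' : IsMaxOn (fun x => q * x - ∫ t, max (x - t) 0 ∂ν.map f) (Ici 0) y := by
    simpa only [hI] using hmax
  have hlt := measure_Iio_le_of_isMaxOn _ h0' hmax' hq
  have hle := le_measure_Iic_of_isMaxOn _ h0' hmax' hy
  rw [Measure.map_apply hf measurableSet_Iio] at hlt
  rw [Measure.map_apply hf measurableSet_Iic] at hle
  exact ⟨hlt, hle⟩

lemma ENNReal.exists_add_mul_eq {a m w : ℝ≥0∞} (ha : a ≤ w) (hw : w ≤ a + m) (hm : m ≠ ⊤) :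
    ∃ θ ≤ 1, a + θ * m = w := by
  rcases eq_or_ne m 0 with rfl | hm0
  · exact ⟨0, zero_le_one, by simpa using le_antisymm ha (by simpa using hw)⟩
  refine ⟨(w - a) / m, ENNReal.div_le_of_le_mul (by rwa [one_mul, tsub_le_iff_left]), ?_⟩
  rw [ENNReal.div_mul_cancel hm0 hm, add_tsub_cancel_of_le ha]

section Split

variable {X : Type*} [MeasurableSpace X]

lemma exists_eq_smul_add_smul_of_measure_le (ν : Measure X) [IsProbabilityMeasure ν]
    {s t : Set X} (hs : MeasurableSet s) (ht : MeasurableSet t) (hst : s ⊆ t) {w : ℝ≥0∞}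
    (hw0 : w ≠ 0) (hw1 : w < 1) (hsw : ν s ≤ w) (hwt : w ≤ ν t) :
    ∃ A B : Measure X, IsProbabilityMeasure A ∧ IsProbabilityMeasure B ∧
      A tᶜ = 0 ∧ B s = 0 ∧ ν = w • A + (1 - w) • B := by
  have hwtop : w ≠ ⊤ := ne_top_of_lt hw1
  have hts : MeasurableSet (t \ s) := ht.diff hs
  have hνt : ν t = ν s + ν (t \ s) := by
    rw [← measure_union disjoint_sdiff_right hts, union_sdiff_cancel hst]
  obtain ⟨θ, hθ1, hθ⟩ := ENNReal.exists_add_mul_eq hsw (hνt ▸ hwt) (measure_ne_top ν _)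
  set α := ν.restrict s + θ • ν.restrict (t \ s)
  set β := ν.restrict tᶜ + (1 - θ) • ν.restrict (t \ s)
  have hsum : α + β = ν := by
    calc α + β = ν.restrict s + ν.restrict (t \ s) + ν.restrict tᶜ := by
          rw [add_add_add_comm, ← add_smul, add_tsub_cancel_of_le hθ1, one_smul, add_right_comm]
      _ = ν := by
          rw [← Measure.restrict_union disjoint_sdiff_right hts, union_sdiff_cancel hst,
            Measure.restrict_add_restrict_compl ht]
  have hα : α univ = w := by simp [α, hθ]
  have hβ : β univ = 1 - w := by
    refine ENNReal.eq_sub_of_add_eq hwtop ?_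
    rw [← hα, add_comm, ← Measure.add_apply, hsum, measure_univ]
  have hw : 1 - w ≠ 0 := (tsub_pos_of_lt hw1).ne'
  refine ⟨w⁻¹ • α, (1 - w)⁻¹ • β, ⟨?_⟩, ⟨?_⟩, ?_, ?_, ?_⟩
  · simp [hα, ENNReal.inv_mul_cancel hw0 hwtop]
  · simp [hβ, ENNReal.inv_mul_cancel hw (by simp)]
  · simp [α, Measure.restrict_apply' hs, Measure.restrict_apply' hts,
      (disjoint_compl_left.mono_right hst).inter_eq,
      (disjoint_compl_left.mono_right sdiff_subset).inter_eq]
  · simp [β, Measure.restrict_apply' ht.compl, Measure.restrict_apply' hts,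
      (disjoint_compl_right.mono_left hst).inter_eq]
  · rw [smul_smul, smul_smul, ENNReal.mul_inv_cancel hw0 hwtop, ENNReal.mul_inv_cancel hw (by simp),
      one_smul, one_smul, hsum]

lemma exists_eq_smul_add_smul_of_quantile (ν : Measure X) [IsProbabilityMeasure ν] {f : X → ℝ}
    (hf : Measurable f) (h0 : ∀ᵐ v ∂ν, 0 ≤ f v) {q a : ℝ} (hq0 : 0 < q) (hq1 : q < 1)
    (hlt : ν {v | f v < a} ≤ ENNReal.ofReal q) (hle : ENNReal.ofReal q ≤ ν {v | f v ≤ a}) :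
    ∃ A B : Measure X, IsProbabilityMeasure A ∧ IsProbabilityMeasure B ∧
      (∀ᵐ v ∂A, 0 ≤ f v ∧ f v ≤ a) ∧ (∀ᵐ v ∂B, 0 ≤ f v ∧ a ≤ f v) ∧
      ν = ENNReal.ofReal q • A + (1 - ENNReal.ofReal q) • B := by
  have hw0 : ENNReal.ofReal q ≠ 0 := (ENNReal.ofReal_pos.2 hq0).ne'
  have hw1 : ENNReal.ofReal q < 1 := ENNReal.ofReal_lt_one.2 hq1
  obtain ⟨A, B, hA, hB, hAt, hBs, hν⟩ := exists_eq_smul_add_smul_of_measure_le ν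
    (measurableSet_lt hf measurable_const) (measurableSet_le hf measurable_const)
    (fun v (hv : f v < a) => hv.le) hw0 hw1 hlt hle
  have hAν : A ≪ ν := by
    rw [hν]; exact (Measure.absolutelyContinuous_smul hw0).add_right _
  have hBν : B ≪ ν := by
    rw [hν, add_comm]
    exact (Measure.absolutelyContinuous_smul (tsub_pos_of_lt hw1).ne').add_right _
  refine ⟨A, B, hA, hB, ?_, ?_, hν⟩
  · filter_upwards [hAν.ae_le h0, mem_ae_iff.2 hAt] with v h0v hv using ⟨h0v, hv⟩
  · filter_upwards [hBν.ae_le h0, measure_eq_zero_iff_ae_notMem.1 hBs] with v h0v hv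
      using ⟨h0v, not_lt.1 hv⟩

end Split

section Blocks

variable {ι : Type*} {R : ℕ} (ρ : ι → Fin R)

def blockRestrict (r : Fin R) (d : ι → ℝ) : {i : ι // ρ i = r} → ℝ := fun i => d i.1

def blockCombine (w : ∀ r, {i : ι // ρ i = r} → ℝ) : ι → ℝ := fun i => w (ρ i) ⟨i, rfl⟩

def blockDemand [Fintype ι] [DecidableEq ι] (S : Finset ι) (r : Fin R)
    (w : {i : ι // ρ i = r} → ℝ) : ℝ :=
  ∑ i ∈ Finset.univ.filter (fun i : {i : ι // ρ i = r} => i.1 ∈ S), w i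

lemma measurable_blockRestrict (r : Fin R) : Measurable (blockRestrict ρ r) :=
  measurable_pi_lambda _ fun i => measurable_pi_apply i.1

lemma measurable_blockCombine : Measurable (blockCombine ρ) :=
  measurable_pi_lambda _ fun i => (measurable_pi_apply _).comp (measurable_pi_apply (ρ i))

lemma measurable_blockDemand [Fintype ι] [DecidableEq ι] (S : Finset ι) (r : Fin R) :
    Measurable (blockDemand ρ S r) :=
  Finset.measurable_sum _ fun i _ => measurable_pi_apply i

lemma blockRestrict_blockCombine (r : Fin R) (w : ∀ r, {i : ι // ρ i = r} → ℝ) :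
    blockRestrict ρ r (blockCombine ρ w) = w r := by
  funext ⟨i, hi⟩
  subst hi
  rfl

lemma sum_eq_sum_blockDemand [Fintype ι] [DecidableEq ι] (S : Finset ι) (d : ι → ℝ) :
    ∑ i ∈ S, d i = ∑ r, blockDemand ρ S r (blockRestrict ρ r d) := by
  rw [← Finset.sum_fiberwise S ρ d]
  refine Finset.sum_congr rfl fun r _ => ?_
  rw [← Finset.sum_subtype_eq_sum_filter]
  exact Finset.sum_congr (by ext; simp) fun _ _ => rfl

end Blocks

section Frechet

variable {ι : Type*} [Fintype ι] {R : ℕ} {ρ : ι → Fin R}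
  {P : (r : Fin R) → Measure ({i : ι // ρ i = r} → ℝ)} {μ : Measure (ι → ℝ)}

lemma mem_frechet_iff : μ ∈ frechet ρ P ↔
    IsProbabilityMeasure μ ∧ ∀ r, μ.map (blockRestrict ρ r) = P r :=
  Iff.rfl

lemma map_blockRestrict_of_mem_frechet (hμ : μ ∈ frechet ρ P) (r : Fin R) :
    μ.map (blockRestrict ρ r) = P r :=
  hμ.2 r

lemma ae_blockRestrict_of_mem_frechet (hμ : μ ∈ frechet ρ P) {r : Fin R}
    {p : ({i : ι // ρ i = r} → ℝ) → Prop} (h : ∀ᵐ w ∂P r, p w) :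
    ∀ᵐ d ∂μ, p (blockRestrict ρ r d) :=
  ae_of_ae_map (measurable_blockRestrict ρ r).aemeasurable
    (by rwa [map_blockRestrict_of_mem_frechet hμ])

lemma integral_comp_blockRestrict_of_mem_frechet (hμ : μ ∈ frechet ρ P) {r : Fin R}
    {g : ({i : ι // ρ i = r} → ℝ) → ℝ} (hg : Measurable g) :
    ∫ d, g (blockRestrict ρ r d) ∂μ = ∫ w, g w ∂P r := by
  rw [← map_blockRestrict_of_mem_frechet hμ r]
  exact (integral_map (measurable_blockRestrict ρ r).aemeasurable hg.aestronglyMeasurable).symm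

lemma map_pi_mem_frechet (Q : (r : Fin R) → Measure ({i : ι // ρ i = r} → ℝ))
    [∀ r, IsProbabilityMeasure (Q r)] : (Measure.pi Q).map (blockCombine ρ) ∈ frechet ρ Q := by
  refine mem_frechet_iff.2
    ⟨Measure.isProbabilityMeasure_map (measurable_blockCombine ρ).aemeasurable, fun r => ?_⟩
  rw [Measure.map_map (measurable_blockRestrict ρ r) (measurable_blockCombine ρ)]
  have hcomp : blockRestrict ρ r ∘ blockCombine ρ = Function.eval r :=
    funext (blockRestrict_blockCombine ρ r)
  rw [hcomp, (measurePreserving_eval Q r).map_eq]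

lemma smul_add_smul_mem_frechet {A B : (r : Fin R) → Measure ({i : ι // ρ i = r} → ℝ)}
    {μA μB : Measure (ι → ℝ)} (hA : μA ∈ frechet ρ A) (hB : μB ∈ frechet ρ B) {w₁ w₂ : ℝ≥0∞}
    (hw : w₁ + w₂ = 1) : w₁ • μA + w₂ • μB ∈ frechet ρ (fun r => w₁ • A r + w₂ • B r) := by
  have := hA.1
  have := hB.1
  refine mem_frechet_iff.2 ⟨⟨by simp [hw]⟩, fun r => ?_⟩
  rw [Measure.map_add _ _ (measurable_blockRestrict ρ r), Measure.map_smul, Measure.map_smul,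
    map_blockRestrict_of_mem_frechet hA, map_blockRestrict_of_mem_frechet hB]

end Frechet

section Coupling

variable {ι : Type*} [Fintype ι] [DecidableEq ι] {R : ℕ} {ρ : ι → Fin R}
  {P : (r : Fin R) → Measure ({i : ι // ρ i = r} → ℝ)} {μ : Measure (ι → ℝ)} {S : Finset ι}

lemma ae_nonneg_sum_of_mem_frechet (hμ : μ ∈ frechet ρ P)
    (h0 : ∀ r, ∀ᵐ w ∂P r, 0 ≤ blockDemand ρ S r w) : ∀ᵐ d ∂μ, 0 ≤ ∑ i ∈ S, d i := by
  filter_upwards [ae_all_iff.2 fun r => ae_blockRestrict_of_mem_frechet hμ (h0 r)] with d hd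
  rw [sum_eq_sum_blockDemand ρ S d]
  exact Finset.sum_nonneg fun r _ => hd r

lemma integrable_max_sub_blockDemand_of_mem_frechet (hμ : μ ∈ frechet ρ P)
    (h0 : ∀ r, ∀ᵐ w ∂P r, 0 ≤ blockDemand ρ S r w) (r : Fin R) (x : ℝ) :
    Integrable (fun d => max (x - blockDemand ρ S r (blockRestrict ρ r d)) 0) μ :=
  have := hμ.1
  integrable_max_sub_of_ae_nonneg
    ((measurable_blockDemand ρ S r).comp (measurable_blockRestrict ρ r)).aestronglyMeasurable
    (ae_blockRestrict_of_mem_frechet hμ (h0 r)) x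

lemma integral_sum_max_sub_blockDemand_of_mem_frechet (hμ : μ ∈ frechet ρ P)
    (h0 : ∀ r, ∀ᵐ w ∂P r, 0 ≤ blockDemand ρ S r w) (a : Fin R → ℝ) :
    ∫ d, ∑ r, max (a r - blockDemand ρ S r (blockRestrict ρ r d)) 0 ∂μ
      = ∑ r, ∫ w, max (a r - blockDemand ρ S r w) 0 ∂P r := by
  rw [integral_finsetSum _ fun r _ =>
    integrable_max_sub_blockDemand_of_mem_frechet hμ h0 r (a r)]
  exact Finset.sum_congr rfl fun r _ => integral_comp_blockRestrict_of_mem_frechet hμ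
    ((measurable_const.sub (measurable_blockDemand ρ S r)).max measurable_const)

lemma integral_max_sum_sub_le_of_mem_frechet (hμ : μ ∈ frechet ρ P)
    (h0 : ∀ r, ∀ᵐ w ∂P r, 0 ≤ blockDemand ρ S r w) (a : Fin R → ℝ) :
    ∫ d, max (∑ r, a r - ∑ i ∈ S, d i) 0 ∂μ
      ≤ ∑ r, ∫ w, max (a r - blockDemand ρ S r w) 0 ∂P r := by
  have := hμ.1
  rw [← integral_sum_max_sub_blockDemand_of_mem_frechet hμ h0 a]
  refine integral_mono_of_nonneg (.of_forall fun d => le_max_right _ _) ?_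
    (.of_forall fun d => ?_)
  · exact integrable_finsetSum _ fun r _ =>
      integrable_max_sub_blockDemand_of_mem_frechet hμ h0 r (a r)
  · simpa only [sum_eq_sum_blockDemand ρ S d] using max_sum_sub_sum_le _ _ _

lemma le_integral_max_sub_of_mem_frechet (hμ : μ ∈ frechet ρ P)
    (h0 : ∀ r, ∀ᵐ w ∂P r, 0 ≤ blockDemand ρ S r w) {a : Fin R → ℝ}
    (hle : ∀ r, ∀ᵐ w ∂P r, blockDemand ρ S r w ≤ a r) (y : ℝ) :
    y - ∑ r, a r + ∑ r, ∫ w, max (a r - blockDemand ρ S r w) 0 ∂P r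
      ≤ ∫ d, max (y - ∑ i ∈ S, d i) 0 ∂μ := by
  have := hμ.1
  have hsum := integrable_finsetSum Finset.univ fun r _ =>
    integrable_max_sub_blockDemand_of_mem_frechet hμ h0 r (a r)
  rw [← integral_sum_max_sub_blockDemand_of_mem_frechet hμ h0 a]
  calc y - ∑ r, a r + ∫ d, ∑ r, max (a r - blockDemand ρ S r (blockRestrict ρ r d)) 0 ∂μ
      = ∫ d, (y - ∑ r, a r + ∑ r, max (a r - blockDemand ρ S r (blockRestrict ρ r d)) 0) ∂μ := by
        rw [integral_add (integrable_const _) hsum, integral_const, probReal_univ, one_smul]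
    _ ≤ ∫ d, max (y - ∑ i ∈ S, d i) 0 ∂μ := by
        refine integral_mono_ae ((integrable_const _).add hsum)
          (integrable_max_sub_of_ae_nonneg (Finset.measurable_sum _ fun i _ =>
            measurable_pi_apply i).aestronglyMeasurable (ae_nonneg_sum_of_mem_frechet hμ h0) y) ?_
        filter_upwards [ae_all_iff.2 fun r => ae_blockRestrict_of_mem_frechet hμ (hle r)]
          with d hd
        rw [sum_eq_sum_blockDemand ρ S d]
        exact sub_sum_add_sum_max_le _ (fun r _ => hd r) y

lemma exists_mem_frechet_le_integral_max_sub [∀ r, IsProbabilityMeasure (P r)]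
    (h0 : ∀ r, ∀ᵐ w ∂P r, 0 ≤ blockDemand ρ S r w) {q : ℝ} (hq0 : 0 < q) (hq1 : q < 1)
    {a : Fin R → ℝ}
    (ha : ∀ r, P r {w | blockDemand ρ S r w < a r} ≤ ENNReal.ofReal q ∧
      ENNReal.ofReal q ≤ P r {w | blockDemand ρ S r w ≤ a r}) :
    ∃ μ ∈ frechet ρ P, ∀ y, q * (y - ∑ r, a r) + ∑ r, ∫ w, max (a r - blockDemand ρ S r w) 0 ∂P r
      ≤ ∫ d, max (y - ∑ i ∈ S, d i) 0 ∂μ := by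
  choose A B hA hB hAa hBa hP using fun r => exists_eq_smul_add_smul_of_quantile (P r)
    (measurable_blockDemand ρ S r) (h0 r) hq0 hq1 (ha r).1 (ha r).2
  have hw1 : (1 - ENNReal.ofReal q).toReal = 1 - q := by
    rw [ENNReal.toReal_sub_of_le (ENNReal.ofReal_lt_one.2 hq1).le ENNReal.one_ne_top,
      ENNReal.toReal_ofReal hq0.le, ENNReal.toReal_one]
  have hμA := map_pi_mem_frechet (ρ := ρ) A
  have hμB := map_pi_mem_frechet (ρ := ρ) B
  have hμ := smul_add_smul_mem_frechet hμA hμB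
    (add_tsub_cancel_of_le (ENNReal.ofReal_lt_one.2 hq1).le)
  rw [← funext hP] at hμ
  refine ⟨_, hμ, fun y => ?_⟩
  have hA0 r := (hAa r).mono fun _ h => h.1
  have hB0 r := (hBa r).mono fun _ h => h.1
  have hPA r : ∫ v, max (a r - blockDemand ρ S r v) 0 ∂P r
      = q * ∫ v, max (a r - blockDemand ρ S r v) 0 ∂A r := by
    have hBzero : ∫ v, max (a r - blockDemand ρ S r v) 0 ∂B r = 0 := integral_eq_zero_of_ae <| by
      filter_upwards [hBa r] with v hv using max_eq_right (sub_nonpos.2 hv.2)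
    rw [hP r, integral_smul_add_smul_measure
      (integrable_max_sub_of_ae_nonneg (measurable_blockDemand ρ S r).aestronglyMeasurable
        (hA0 r) _)
      (integrable_max_sub_of_ae_nonneg (measurable_blockDemand ρ S r).aestronglyMeasurable
        (hB0 r) _)
      ENNReal.ofReal_ne_top (by simp), hBzero, ENNReal.toReal_ofReal hq0.le, mul_zero, add_zero]
  have hDmeas : Measurable fun d : ι → ℝ => ∑ i ∈ S, d i :=
    Finset.measurable_sum _ fun i _ => measurable_pi_apply i
  have := hμA.1
  have := hμB.1
  rw [integral_smul_add_smul_measure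
    (integrable_max_sub_of_ae_nonneg hDmeas.aestronglyMeasurable
      (ae_nonneg_sum_of_mem_frechet hμA hA0) y)
    (integrable_max_sub_of_ae_nonneg hDmeas.aestronglyMeasurable
      (ae_nonneg_sum_of_mem_frechet hμB hB0) y)
    ENNReal.ofReal_ne_top (by simp), ENNReal.toReal_ofReal hq0.le, hw1]
  calc q * (y - ∑ r, a r) + ∑ r, ∫ v, max (a r - blockDemand ρ S r v) 0 ∂P r
      = q * (y - ∑ r, a r + ∑ r, ∫ v, max (a r - blockDemand ρ S r v) 0 ∂A r) := by
        simp only [hPA, ← Finset.mul_sum]; ring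
    _ ≤ q * ∫ d, max (y - ∑ i ∈ S, d i) 0 ∂(Measure.pi A).map (blockCombine ρ) :=
        mul_le_mul_of_nonneg_left (le_integral_max_sub_of_mem_frechet hμA hA0
          (fun r => (hAa r).mono fun _ h => h.2) y) hq0.le
    _ ≤ _ := le_add_of_nonneg_right (mul_nonneg (by linarith)
        (integral_nonneg fun _ => le_max_right _ _))

end Coupling

section WorstCase

variable {ι : Type*} [Fintype ι] [DecidableEq ι] {R : ℕ} {ρ : ι → Fin R}
  {P : (r : Fin R) → Measure ({i : ι // ρ i = r} → ℝ)} {S : Finset ι} {p c : ℝ}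

lemma fdet_eq (r : Fin R) (x : ℝ) :
    fdet ρ P p c S r x = (p - c) * x - p * ∫ w, max (x - blockDemand ρ S r w) 0 ∂P r :=
  rfl

lemma gwc_le_of_mem_frechet {μ : Measure (ι → ℝ)} (hμ : μ ∈ frechet ρ P)
    (h0 : ∀ r, ∀ᵐ w ∂P r, 0 ≤ blockDemand ρ S r w) (hp : 0 ≤ p) (y : ℝ) :
    gwc ρ P p c S y ≤ (p - c) * y - p * ∫ d, max (y - ∑ i ∈ S, d i) 0 ∂μ := by
  have hbdd : BddAbove (range fun ν : frechet ρ P => ∫ d, max (y - ∑ i ∈ S, d i) 0 ∂ν.1) :=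
    ⟨max y 0, forall_mem_range.2 fun ν =>
      have := ν.2.1
      integral_max_sub_le_of_ae_nonneg (ae_nonneg_sum_of_mem_frechet ν.2 h0) y⟩
  exact sub_le_sub_left (mul_le_mul_of_nonneg_left (le_ciSup hbdd ⟨μ, hμ⟩) hp) _

lemma le_gwc_sum (h0 : ∀ r, ∀ᵐ w ∂P r, 0 ≤ blockDemand ρ S r w) (hp : 0 ≤ p) (a : Fin R → ℝ) :
    (p - c) * ∑ r, a r - p * ∑ r, ∫ w, max (a r - blockDemand ρ S r w) 0 ∂P r
      ≤ gwc ρ P p c S (∑ r, a r) :=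
  sub_le_sub_left (mul_le_mul_of_nonneg_left (Real.iSup_le
    (fun μ => integral_max_sum_sub_le_of_mem_frechet μ.2 h0 a)
    (Finset.sum_nonneg fun _ _ => integral_nonneg fun _ => le_max_right _ _)) hp) _

end WorstCase

theorem stmt_9_general {ι : Type*} [Fintype ι] [DecidableEq ι] {R : ℕ} (ρ : ι → Fin R)
    (P : (r : Fin R) → Measure ({i : ι // ρ i = r} → ℝ))
    (hP : ∀ r, IsProbabilityMeasure (P r))
    (hnonneg : ∀ r, ∀ᵐ w ∂(P r), ∀ i, 0 ≤ w i)
    (p c : ℝ) (hc : 0 < c) (hcp : c < p)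
    (S : Finset ι) (yq : Fin R → ℝ)
    (hyq : ∀ r : Fin R, 0 ≤ yq r ∧
      ∀ x : ℝ, 0 ≤ x → fdet ρ P p c S r x ≤ fdet ρ P p c S r (yq r)) :
    gwc ρ P p c S (∑ r, yq r) = (⨆ y : {y : ℝ // 0 ≤ y}, gwc ρ P p c S y.1) ∧
    (⨆ y : {y : ℝ // 0 ≤ y}, gwc ρ P p c S y.1) = ∑ r, fdet ρ P p c S r (yq r) := by
  have hp : 0 < p := hc.trans hcp
  set q := (p - c) / p
  have hpq : p * q = p - c := mul_div_cancel₀ _ hp.ne'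
  have hq0 : 0 < q := div_pos (by linarith) hp
  have hq1 : q < 1 := (div_lt_one hp).2 (by linarith)
  have h0 r : ∀ᵐ w ∂P r, 0 ≤ blockDemand ρ S r w :=
    (hnonneg r).mono fun w hw => Finset.sum_nonneg fun i _ => hw i
  have hquant r := measure_lt_le_and_le_measure_le_of_isMaxOn (P r) (measurable_blockDemand ρ S r)
    (h0 r) hq0.le (hyq r).1 fun x hx =>
      le_of_mul_le_mul_left
        (by simpa only [mul_sub, ← mul_assoc, hpq, fdet_eq] using (hyq r).2 x hx) hp
  obtain ⟨μ, hμ, hge⟩ := exists_mem_frechet_le_integral_max_sub h0 hq0 hq1 hquant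
  have hV : ∑ r, fdet ρ P p c S r (yq r) = (p - c) * ∑ r, yq r
      - p * ∑ r, ∫ w, max (yq r - blockDemand ρ S r w) 0 ∂P r := by
    rw [Finset.mul_sum, Finset.mul_sum, ← Finset.sum_sub_distrib]; rfl
  have hupper y : gwc ρ P p c S y ≤ ∑ r, fdet ρ P p c S r (yq r) := by
    have := mul_le_mul_of_nonneg_left (hge y) hp.le
    rw [mul_add, ← mul_assoc, hpq] at this
    linarith [gwc_le_of_mem_frechet (c := c) hμ h0 hp.le y]
  have hlower := hV ▸ le_gwc_sum h0 hp.le yq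
  have hsup : ⨆ y : {y : ℝ // 0 ≤ y}, gwc ρ P p c S y.1 = ∑ r, fdet ρ P p c S r (yq r) :=
    have : Nonempty {y : ℝ // 0 ≤ y} := ⟨⟨0, le_rfl⟩⟩
    le_antisymm (ciSup_le fun y => hupper y) (hlower.trans
      (le_ciSup (f := fun y : {y : ℝ // 0 ≤ y} => gwc ρ P p c S y.1)
        ⟨_, forall_mem_range.2 fun y => hupper y⟩
        ⟨∑ r, yq r, Finset.sum_nonneg fun r _ => (hyq r).1⟩))
  exact ⟨(le_antisymm (hupper _) hlower).trans hsup.symm, hsup⟩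

/-- The worst-case optimal ordering quantity decomposes as
`y*_wc(S) = ∑_r y*(S_r)` (a sum of block quantiles/maximizers), and the worst-case optimal
profit decomposes as `v_wc(S) = ∑_r v̄(S_r)`. -/
theorem stmt_9 {ι : Type*} [Fintype ι] [DecidableEq ι] {R : ℕ} (ρ : ι → Fin R)
    (P : (r : Fin R) → Measure ({i : ι // ρ i = r} → ℝ))
    (hP : ∀ r, IsProbabilityMeasure (P r))
    (hnonneg : ∀ r, ∀ᵐ w ∂(P r), ∀ i, 0 ≤ w i)
    (hbdd : ∀ r, ∃ M : ℝ, ∀ᵐ w ∂(P r), ∀ i, w i ≤ M)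
    (p c : ℝ) (hc : 0 < c) (hcp : c < p)
    (S : Finset ι) (yq : Fin R → ℝ)
    (hyq : ∀ r : Fin R, 0 ≤ yq r ∧
      ∀ x : ℝ, 0 ≤ x → fdet ρ P p c S r x ≤ fdet ρ P p c S r (yq r)) :
    gwc ρ P p c S (∑ r, yq r) = (⨆ y : {y : ℝ // 0 ≤ y}, gwc ρ P p c S y.1) ∧
    (⨆ y : {y : ℝ // 0 ≤ y}, gwc ρ P p c S y.1) = ∑ r, fdet ρ P p c S r (yq r) :=
  stmt_9_general ρ P hP hnonneg p c hc hcp S yq hyq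
end

section
/- For every P ∈ P(P_1,...,P_R), v_P(y*_wc(N), N) ≥ Σ_{r=1}^R v̄(N_r), where y*_wc(N) = Σ_{r=1}^R y*(N_r). -/
/-!
Pool the orders `y_r` of the blocks. Pointwise, the pooled shortfall
`(∑ r, y_r - d̃(N))⁺ = (∑ r, (y_r - d̃(N_r)))⁺` is at most `∑ r, (y_r - d̃(N_r))⁺`, so its
expectation under any joint law is at most the sum of the block shortfalls, and each of those
only depends on the marginal of its block.
-/

open MeasureTheory

/-- Expected newsvendor profit of coalition `S` under joint distribution `μ` and order `y`. -/
noncomputable def vP {ι : Type*} [Fintype ι] (p c : ℝ) (μ : Measure (ι → ℝ))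
    (y : ℝ) (S : Finset ι) : ℝ :=
  (p - c) * y - p * ∫ d, max (y - ∑ i ∈ S, d i) 0 ∂μ

/-- Deterministic newsvendor objective of the full block `N_r` under the marginal `P r`. -/
noncomputable def fblock {ι : Type*} [Fintype ι] {R : ℕ} (ρ : ι → Fin R)
    (P : (r : Fin R) → Measure ({i : ι // ρ i = r} → ℝ))
    (p c : ℝ) (r : Fin R) (x : ℝ) : ℝ :=
  (p - c) * x - p * ∫ w, max (x - ∑ i : {i : ι // ρ i = r}, w i) 0 ∂(P r)

lemma max_sum_le_sum_max {α : Type*} (s : Finset α) (a : α → ℝ) :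
    max (∑ r ∈ s, a r) 0 ≤ ∑ r ∈ s, max (a r) 0 :=
  max_le (Finset.sum_le_sum fun _ _ => le_max_left _ _)
    (Finset.sum_nonneg fun _ _ => le_max_right _ _)

lemma integrable_max_sub_zero_of_ae_nonneg {Ω : Type*} [MeasurableSpace Ω] {μ : Measure Ω}
    [IsFiniteMeasure μ] {g : Ω → ℝ} (hg : Measurable g) (h0 : ∀ᵐ ω ∂μ, 0 ≤ g ω) (y : ℝ) :
    Integrable (fun ω => max (y - g ω) 0) μ := by
  refine (integrable_const (max y 0)).mono' (by fun_prop) (h0.mono fun ω hω => ?_)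
  rw [Real.norm_of_nonneg (le_max_right _ _)]
  exact max_le_max_right 0 (by linarith)

lemma measurable_block_restrict {ι : Type*} {R : ℕ} (ρ : ι → Fin R) (r : Fin R) :
    Measurable (fun (d : ι → ℝ) (i : {i : ι // ρ i = r}) => d i.1) :=
  measurable_pi_lambda _ fun i => measurable_pi_apply i.1

section Frechet

variable {ι : Type*} [Fintype ι] {R : ℕ} {ρ : ι → Fin R}
  {P : (r : Fin R) → Measure ({i : ι // ρ i = r} → ℝ)} {μ : Measure (ι → ℝ)}

lemma ae_nonneg_of_mem_frechet (hnonneg : ∀ r, ∀ᵐ w ∂(P r), ∀ i, 0 ≤ w i)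
    (hμ : μ ∈ frechet ρ P) : ∀ᵐ d ∂μ, ∀ i, 0 ≤ d i := by
  rw [ae_all_iff]
  intro i
  have hblock := hnonneg (ρ i)
  rw [← hμ.2 (ρ i)] at hblock
  filter_upwards [ae_of_ae_map (measurable_block_restrict ρ (ρ i)).aemeasurable hblock]
    with d hd using hd ⟨i, rfl⟩

lemma integral_block_sum_eq_of_mem_frechet (hμ : μ ∈ frechet ρ P) (r : Fin R)
    {F : ℝ → ℝ} (hF : Continuous F) :
    ∫ w, F (∑ i, w i) ∂(P r) = ∫ d, F (∑ i : {i : ι // ρ i = r}, d i.1) ∂μ := by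
  rw [← hμ.2 r, integral_map (measurable_block_restrict ρ r).aemeasurable]
  exact (hF.comp (by fun_prop)).aestronglyMeasurable

lemma integral_shortfall_le_sum_block_of_mem_frechet
    (hnonneg : ∀ r, ∀ᵐ w ∂(P r), ∀ i, 0 ≤ w i) (hμ : μ ∈ frechet ρ P) (y : Fin R → ℝ) :
    ∫ d, max ((∑ r, y r) - ∑ i, d i) 0 ∂μ ≤
      ∑ r, ∫ w, max (y r - ∑ i, w i) 0 ∂(P r) := by
  have : IsProbabilityMeasure μ := hμ.1
  have hnn := ae_nonneg_of_mem_frechet hnonneg hμ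
  have hblock_int : ∀ r, Integrable (fun d : ι → ℝ =>
      max (y r - ∑ i : {i : ι // ρ i = r}, d i.1) 0) μ := fun r =>
    integrable_max_sub_zero_of_ae_nonneg (by fun_prop)
      (hnn.mono fun d hd => Finset.sum_nonneg fun i _ => hd i.1) (y r)
  have hpointwise : ∀ d : ι → ℝ, max ((∑ r, y r) - ∑ i, d i) 0 ≤
      ∑ r, max (y r - ∑ i : {i : ι // ρ i = r}, d i.1) 0 := fun d => by
    rw [← Fintype.sum_fiberwise ρ d, ← Finset.sum_sub_distrib]
    exact max_sum_le_sum_max _ _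
  have htransfer : ∀ r, ∫ w, max (y r - ∑ i, w i) 0 ∂(P r) =
      ∫ d, max (y r - ∑ i : {i : ι // ρ i = r}, d i.1) 0 ∂μ := fun r =>
    integral_block_sum_eq_of_mem_frechet hμ r (F := fun s => max (y r - s) 0) (by fun_prop)
  rw [Finset.sum_congr rfl fun r _ => htransfer r,
    ← integral_finsetSum _ fun r _ => hblock_int r]
  exact integral_mono
    (integrable_max_sub_zero_of_ae_nonneg (by fun_prop)
      (hnn.mono fun d hd => Finset.sum_nonneg fun i _ => hd i) _)
    (integrable_finsetSum _ fun r _ => hblock_int r) hpointwise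

end Frechet

theorem stmt_12_general {ι : Type*} [Fintype ι] {R : ℕ} (ρ : ι → Fin R)
    (P : (r : Fin R) → Measure ({i : ι // ρ i = r} → ℝ))
    (hnonneg : ∀ r, ∀ᵐ w ∂(P r), ∀ i, 0 ≤ w i)
    (p c : ℝ) (hc : 0 < c) (hcp : c < p)
    (yq : Fin R → ℝ) :
    ∀ μ ∈ frechet ρ P,
      ∑ r, fblock ρ P p c r (yq r) ≤ vP p c μ (∑ r, yq r) Finset.univ := by
  intro μ hμ
  have hshortfall := integral_shortfall_le_sum_block_of_mem_frechet hnonneg hμ yq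
  have hp : 0 ≤ p := by linarith
  simp only [fblock, vP]
  rw [Finset.sum_sub_distrib, ← Finset.mul_sum, ← Finset.mul_sum]
  linarith [mul_le_mul_of_nonneg_left hshortfall hp]

/-- For every `P` in the Fréchet class, `v_P(y*_wc(N), N) ≥ ∑_r v̄(N_r)`, where
`y*_wc(N) = ∑_r y*(N_r)` and `y*(N_r)` maximizes the block-`r` deterministic newsvendor
objective (i.e. it is the `(p-c)/p`-quantile of `d̃(N_r)`). -/
theorem stmt_12 {ι : Type*} [Fintype ι] {R : ℕ} (ρ : ι → Fin R)
    (P : (r : Fin R) → Measure ({i : ι // ρ i = r} → ℝ))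
    (hP : ∀ r, IsProbabilityMeasure (P r))
    (hnonneg : ∀ r, ∀ᵐ w ∂(P r), ∀ i, 0 ≤ w i)
    (hbdd : ∀ r, ∃ M : ℝ, ∀ᵐ w ∂(P r), ∀ i, w i ≤ M)
    (p c : ℝ) (hc : 0 < c) (hcp : c < p)
    (yq : Fin R → ℝ)
    (hyq : ∀ r : Fin R, 0 ≤ yq r ∧
      ∀ x : ℝ, 0 ≤ x → fblock ρ P p c r x ≤ fblock ρ P p c r (yq r)) :
    ∀ μ ∈ frechet ρ P,
      ∑ r, fblock ρ P p c r (yq r) ≤ vP p c μ (∑ r, yq r) Finset.univ :=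
  stmt_12_general ρ P hnonneg p c hc hcp yq
end

section
/- In Example 1's setting, v_P(y*_wc(N), N) = v_wc(N) for every P in the Fréchet class: with d̃_1 + d̃_2 = D almost surely and d̃_3 ~ U(0,D), y*_wc(N) = D(2p−c)/p, and for all P ∈ P(P_1,P_2), (p−c)·y*_wc(N) − p·E_P[(y*_wc(N) − D − d̃_3)⁺] = D(p−c)(3p−c)/(2p). -/
/-! Since `d̃_1 + d̃_2 = D` almost surely, the pooled shortfall `(y - Σ d̃_i)⁺` equals
`(y - D - d̃_3)⁺` almost surely, so both expectations depend only on the law `U(0,D)` of `d̃_3`.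
For `0 ≤ a ≤ D` one has `E(a - U)⁺ = a² / (2D)`, and at `y = D(2p-c)/p` the shift is
`a = y - D = D(p-c)/p`, the `(p-c)/p`-quantile of `U(0,D)`; the value is then algebra. -/

open MeasureTheory

/-- Uniform distribution on `(0, D)`. -/
noncomputable def unif (D : ℝ) : Measure ℝ :=
  (ENNReal.ofReal D)⁻¹ • volume.restrict (Set.Ioo 0 D)

/-- Expected newsvendor profit of coalition `S ⊆ {1,2,3}` under joint law `μ`, order `y`. -/
noncomputable def vP3 (p c : ℝ) (μ : Measure (Fin 3 → ℝ)) (y : ℝ) (S : Finset (Fin 3)) : ℝ :=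
  (p - c) * y - p * ∫ d, max (y - ∑ i ∈ S, d i) 0 ∂μ

/-- Fréchet class for Example 1: `(d̃_1, d̃_2)` perfectly negatively correlated uniforms
summing to `D`, and `d̃_3 ~ U(0,D)`. -/
def frechet3 (D : ℝ) : Set (Measure (Fin 3 → ℝ)) :=
  {μ | IsProbabilityMeasure μ ∧
    μ.map (fun d => (d 0, d 1)) = (unif D).map (fun t => (t, D - t)) ∧
    μ.map (fun d => d 2) = unif D}

theorem integral_unif {D : ℝ} (hD : 0 ≤ D) (f : ℝ → ℝ) :
    ∫ t, f t ∂unif D = D⁻¹ * ∫ t in (0 : ℝ)..D, f t := by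
  rw [unif, integral_smul_measure, ENNReal.toReal_inv, ENNReal.toReal_ofReal hD,
    intervalIntegral.integral_of_le hD, integral_Ioc_eq_integral_Ioo, smul_eq_mul]

theorem intervalIntegral_max_sub_zero {a D : ℝ} (ha : 0 ≤ a) (haD : a ≤ D) :
    ∫ t in (0 : ℝ)..D, max (a - t) 0 = a ^ 2 / 2 := by
  have hint (x y : ℝ) : IntervalIntegrable (fun t => max (a - t) 0) volume x y :=
    (by fun_prop : Continuous fun t : ℝ => max (a - t) 0).intervalIntegrable x y
  have hleft : ∫ t in (0 : ℝ)..a, max (a - t) 0 = ∫ t in (0 : ℝ)..a, (a - t) :=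
    intervalIntegral.integral_congr fun t ht => by
      rw [Set.uIcc_of_le ha] at ht
      exact max_eq_left (by linarith [ht.2])
  have hright : ∫ t in a..D, max (a - t) 0 = ∫ t in a..D, (0 : ℝ) :=
    intervalIntegral.integral_congr fun t ht => by
      rw [Set.uIcc_of_le haD] at ht
      exact max_eq_right (by linarith [ht.1])
  rw [← intervalIntegral.integral_add_adjacent_intervals (hint 0 a) (hint a D), hleft, hright,
    intervalIntegral.integral_comp_sub_left (fun x => x)]
  simp

theorem integral_unif_max_sub_zero {a D : ℝ} (ha : 0 ≤ a) (haD : a ≤ D) :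
    ∫ t, max (a - t) 0 ∂unif D = a ^ 2 / (2 * D) := by
  rw [integral_unif (ha.trans haD), intervalIntegral_max_sub_zero ha haD]
  ring

namespace frechet3

variable {D : ℝ} {μ : Measure (Fin 3 → ℝ)}

theorem ae_add_eq (hμ : μ ∈ frechet3 D) : ∀ᵐ d ∂μ, d 0 + d 1 = D := by
  have hsum : MeasurableSet {q : ℝ × ℝ | q.1 + q.2 = D} :=
    measurableSet_eq_fun (by fun_prop) measurable_const
  have h : ∀ᵐ q ∂(unif D).map (fun t => (t, D - t)), q.1 + q.2 = D :=
    (ae_map_iff (by fun_prop) hsum).2 (by simp)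
  rw [← hμ.2.1] at h
  exact (ae_map_iff (by fun_prop) hsum).1 h

theorem integral_comp_apply_two (hμ : μ ∈ frechet3 D) {f : ℝ → ℝ} (hf : Measurable f) :
    ∫ d, f (d 2) ∂μ = ∫ t, f t ∂unif D := by
  rw [← hμ.2.2, integral_map (measurable_pi_apply 2).aemeasurable hf.aestronglyMeasurable]

end frechet3

/-- In Example 1's setting, `v_P(y*_wc(N), N) = v_wc(N)` for every `P` in the Fréchet
class: with `y*_wc(N) = D(2p-c)/p`, for all `P ∈ P(P_1,P_2)`,
`(p-c)·y*_wc(N) - p·E_P[(y*_wc(N) - D - d̃_3)⁺] = D(p-c)(3p-c)/(2p)`. -/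
theorem stmt_15 (p c D : ℝ) (hc : 0 < c) (hcp : c < p) (hD : 0 < D) :
    ∀ μ ∈ frechet3 D,
      vP3 p c μ (D * (2 * p - c) / p) Finset.univ = D * (p - c) * (3 * p - c) / (2 * p) ∧
      (p - c) * (D * (2 * p - c) / p) -
          p * ∫ d, max (D * (2 * p - c) / p - D - d 2) 0 ∂μ =
        D * (p - c) * (3 * p - c) / (2 * p) := by
  intro μ hμ
  have hp : 0 < p := hc.trans hcp
  have hy : D * (2 * p - c) / p - D = D * (p - c) / p := by field_simp; ring
  have hy_nonneg : 0 ≤ D * (2 * p - c) / p - D := by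
    rw [hy]
    exact div_nonneg (mul_nonneg hD.le (sub_nonneg.2 hcp.le)) hp.le
  have hy_le : D * (2 * p - c) / p - D ≤ D := by rw [hy, div_le_iff₀ hp]; nlinarith
  have hthird : (p - c) * (D * (2 * p - c) / p) -
      p * ∫ d, max (D * (2 * p - c) / p - D - d 2) 0 ∂μ =
        D * (p - c) * (3 * p - c) / (2 * p) := by
    rw [frechet3.integral_comp_apply_two hμ (f := fun t => max (D * (2 * p - c) / p - D - t) 0)
      (by fun_prop), integral_unif_max_sub_zero hy_nonneg hy_le, hy]
    field_simp
    ring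
  refine ⟨?_, hthird⟩
  rw [vP3, ← hthird]
  congr 2
  refine integral_congr_ae ?_
  filter_upwards [frechet3.ae_add_eq hμ] with d hd
  rw [Fin.sum_univ_three, hd, sub_add_eq_sub_sub]
end

section
/- For the bilinear program defining v_max(y,S) under discrete demand distributions, there exists an optimal solution (γ*, θ*, ψ*) with γ* ∈ {d_1(S),...,d_K(S)}; i.e., the optimal stand-alone order quantity for the breakaway coalition can be taken to be one of the finitely many realized demand values. -/
/-!
For fixed `q`, the numerator `γ ↦ (p - c) γ - p ∑ⱼ (γ - d_j(S))⁺ q_j` is concave and piecewise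
linear with breakpoints at the demands `d_j(S)`, its slope is `p - c > 0` to the left of all
breakpoints and `-c < 0` to the right of them. Moving `γ` along its current linear piece in the
direction of nonnegative slope reaches a breakpoint without decreasing the numerator, and the
denominator does not depend on `γ`. Hence the supremum is a maximum over the finitely many
breakpoints of the maxima over the compact set `Q` of continuous ratios, which is attained.
-/

open Finset

section Breakpoint

variable {κ : Type*} [Fintype κ]

lemma sum_max_sub_mul_eq_of_forall_le {d w : κ → ℝ} {x : ℝ} (T : Finset κ)
    (hT : ∀ j ∈ T, d j ≤ x) (hTc : ∀ j ∉ T, x ≤ d j) :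
    ∑ j, max (x - d j) 0 * w j = x * ∑ j ∈ T, w j - ∑ j ∈ T, d j * w j := by
  rw [← sum_subset T.subset_univ fun j _ hj => by
    rw [max_eq_right (sub_nonpos.mpr (hTc j hj)), zero_mul], mul_sum, ← sum_sub_distrib]
  exact sum_congr rfl fun j hj => by rw [max_eq_left (sub_nonneg.mpr (hT j hj))]; ring

lemma exists_le_at_breakpoint {a b : ℝ} {d w : κ → ℝ} (ha : 0 < a)
    (hab : a ≤ b * ∑ j, w j) (γ : ℝ) :
    ∃ k, a * γ - b * ∑ j, max (γ - d j) 0 * w j ≤ a * d k - b * ∑ j, max (d k - d j) 0 * w j := by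
  classical
  set T := univ.filter fun j => d j ≤ γ
  have hmem : ∀ j, j ∈ T ↔ d j ≤ γ := by simp [T]
  set slope := a - b * ∑ j ∈ T, w j
  -- Both `γ` and the chosen breakpoint `d k` lie in the cell where exactly `T` is active.
  suffices ∃ k, (∀ j ∈ T, d j ≤ d k) ∧ (∀ j ∉ T, d k ≤ d j) ∧ 0 ≤ slope * (d k - γ) by
    obtain ⟨k, hkT, hkTc, hslope⟩ := this
    refine ⟨k, ?_⟩
    rw [sum_max_sub_mul_eq_of_forall_le T (fun j => (hmem j).1)
        (fun j hj => (lt_of_not_ge fun h => hj ((hmem j).2 h)).le),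
      sum_max_sub_mul_eq_of_forall_le T hkT hkTc]
    linear_combination hslope
  by_cases hs : slope ≤ 0
  · have hT : T.Nonempty := by
      by_contra h
      simp only [not_nonempty_iff_eq_empty.mp h, sum_empty, mul_zero, sub_zero, slope] at hs
      linarith
    obtain ⟨k, hk, hkmax⟩ := T.exists_max_image d hT
    refine ⟨k, hkmax, fun j hj => ((hmem k).1 hk).trans (le_of_not_ge fun h => hj ((hmem j).2 h)),
      mul_nonneg_of_nonpos_of_nonpos hs (sub_nonpos.mpr ((hmem k).1 hk))⟩
  · have hTc : Tᶜ.Nonempty := by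
      by_contra h
      rw [not_nonempty_iff_eq_empty, compl_eq_empty_iff] at h
      simp only [slope, h] at hs
      linarith
    obtain ⟨k, hk, hkmin⟩ := Tᶜ.exists_min_image d hTc
    have hγk : γ ≤ d k := le_of_not_ge fun h => mem_compl.mp hk ((hmem k).2 h)
    exact ⟨k, fun j hj => ((hmem j).1 hj).trans hγk, fun j hj => hkmin j (mem_compl.mpr hj),
      mul_nonneg (not_le.mp hs).le (sub_nonneg.mpr hγk)⟩

end Breakpoint

lemma exists_forall_le_of_finite_of_isCompact {κ X : Type*} [Finite κ] [Nonempty κ]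
    [TopologicalSpace X] {Q : Set X} (hQ : IsCompact Q) (hQne : Q.Nonempty) {g : κ → X → ℝ}
    (hg : ∀ k, ContinuousOn (g k) Q) : ∃ k₀, ∃ q₀ ∈ Q, ∀ k, ∀ q ∈ Q, g k q ≤ g k₀ q₀ := by
  choose q hqQ hqmax using fun k => hQ.exists_isMaxOn hQne (hg k)
  obtain ⟨k₀, hk₀⟩ := Finite.exists_max fun k => g k (q k)
  exact ⟨k₀, q k₀, hqQ k₀, fun k q' hq' => (hqmax k hq').trans (hk₀ k)⟩

lemma ciSup_ciSup_eq_of_forall_le {α ι ι' : Type*} [ConditionallyCompleteLattice α]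
    {f : ι → ι' → α} (i₀ : ι) (i₀' : ι') (h : ∀ i i', f i i' ≤ f i₀ i₀') :
    ⨆ i, ⨆ i', f i i' = f i₀ i₀' := by
  have : Nonempty ι := ⟨i₀⟩
  have : Nonempty ι' := ⟨i₀'⟩
  have hinner : ∀ i, ⨆ i', f i i' ≤ f i₀ i₀' := fun i => ciSup_le (h i)
  have hbdd : BddAbove (Set.range fun i => ⨆ i', f i i') := ⟨_, Set.forall_mem_range.2 hinner⟩
  have hbdd' : BddAbove (Set.range (f i₀)) := ⟨_, Set.forall_mem_range.2 (h i₀)⟩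
  exact le_antisymm (ciSup_le hinner) (le_ciSup_of_le hbdd i₀ (le_ciSup hbdd' i₀'))

theorem stmt_16_general {κ : Type*} [Fintype κ] [Nonempty κ]
    (p c : ℝ) (hc : 0 < c) (hcp : c < p)
    (dS dN : κ → ℝ) (hdS : ∀ k, 0 ≤ dS k)
    (Q : Set (κ → ℝ)) (hQne : Q.Nonempty) (hQc : IsCompact Q)
    (hprob : ∀ q ∈ Q, (∀ k, 0 ≤ q k) ∧ ∑ k, q k = 1)
    (y : ℝ) (hy : ∀ q ∈ Q, 0 < (p - c) * y - p * ∑ k, max (y - dN k) 0 * q k) :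
    ∃ k : κ, ∃ q ∈ Q,
      ((p - c) * dS k - p * ∑ j, max (dS k - dS j) 0 * q j) /
          ((p - c) * y - p * ∑ j, max (y - dN j) 0 * q j) =
        ⨆ γ : {γ : ℝ // 0 ≤ γ}, ⨆ q' : Q,
          ((p - c) * γ.1 - p * ∑ j, max (γ.1 - dS j) 0 * q'.1 j) /
            ((p - c) * y - p * ∑ j, max (y - dN j) 0 * q'.1 j) := by
  set ratio : ℝ → (κ → ℝ) → ℝ := fun γ q =>
    ((p - c) * γ - p * ∑ j, max (γ - dS j) 0 * q j) /
      ((p - c) * y - p * ∑ j, max (y - dN j) 0 * q j)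
  obtain ⟨k₀, q₀, hq₀, hmax⟩ := exists_forall_le_of_finite_of_isCompact hQc hQne
    (g := fun k => ratio (dS k)) fun k =>
      ContinuousOn.div (by fun_prop) (by fun_prop) fun q hq => (hy q hq).ne'
  have hle : ∀ γ, ∀ q ∈ Q, ratio γ q ≤ ratio (dS k₀) q₀ := by
    intro γ q hq
    have hpq : p - c ≤ p * ∑ j, q j := by rw [(hprob q hq).2]; linarith
    obtain ⟨k, hk⟩ := exists_le_at_breakpoint (sub_pos.mpr hcp) hpq γ
    exact (div_le_div_of_nonneg_right hk (hy q hq).le).trans (hmax k q hq)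
  exact ⟨k₀, q₀, hq₀, (ciSup_ciSup_eq_of_forall_le (f := fun (γ : {γ : ℝ // 0 ≤ γ}) (q : Q) => ratio γ.1 q.1)
    ⟨dS k₀, hdS k₀⟩ ⟨q₀, hq₀⟩ fun γ q => hle γ.1 q.1 q.2).symm⟩

/-- For the bilinear program defining `v_max(y,S)` under discrete demand distributions,
there exists an optimal solution whose stand-alone order quantity `γ*` is one of the
finitely many realized coalition demand values `d_k(S)`. -/
theorem stmt_16 {κ : Type*} [Fintype κ] [Nonempty κ]
    (p c : ℝ) (hc : 0 < c) (hcp : c < p)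
    (dS dN : κ → ℝ) (hdS : ∀ k, 0 ≤ dS k) (hdN : ∀ k, 0 ≤ dN k)
    (Q : Set (κ → ℝ)) (hQne : Q.Nonempty) (hQc : IsCompact Q)
    (hprob : ∀ q ∈ Q, (∀ k, 0 ≤ q k) ∧ ∑ k, q k = 1)
    (y : ℝ) (hy : ∀ q ∈ Q, 0 < (p - c) * y - p * ∑ k, max (y - dN k) 0 * q k) :
    ∃ k : κ, ∃ q ∈ Q,
      ((p - c) * dS k - p * ∑ j, max (dS k - dS j) 0 * q j) /
          ((p - c) * y - p * ∑ j, max (y - dN j) 0 * q j) =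
        ⨆ γ : {γ : ℝ // 0 ≤ γ}, ⨆ q' : Q,
          ((p - c) * γ.1 - p * ∑ j, max (γ.1 - dS j) 0 * q'.1 j) /
            ((p - c) * y - p * ∑ j, max (y - dN j) 0 * q'.1 j) :=
  stmt_16_general p c hc hcp dS dN hdS Q hQne hQc hprob y hy
end

section
/- The least-core value function σ(y) = min{ε : Σ_{i∈S} x_i ≥ v_max(y,S) − ε for all S ⊊ N, Σ_{i∈N} x_i = 1} is a convex function of y on Y(N). -/
/-!
Let `A y` be the set of slacks `ε` achievable at `y` by some imputation `x`. Averaging witnesses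
`(ε₁, x₁)` at `y₁` and `(ε₂, x₂)` at `y₂` gives a witness at the averaged point, because each
`w S` is convex; so `σ = sInf ∘ A` is the infimal projection of a convex set, hence convex.
Each `A y` is bounded below as soon as some coalition `S` is nonempty and proper: the
constraints for `S` and `Sᶜ` add up to `2ε ≥ w S y + w Sᶜ y - 1`. Otherwise the constraints are
vacuous and `σ` is constant.
-/

open Finset

section InfimalProjection

variable {E : Type*} [AddCommMonoid E] [Module ℝ E]

theorem convexOn_sInf_of_mem_combo {Y : Set E} (hY : Convex ℝ Y) {A : E → Set ℝ}
    (hne : ∀ y ∈ Y, (A y).Nonempty) (hbdd : ∀ y ∈ Y, BddBelow (A y))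
    (hcombo : ∀ y₁ ∈ Y, ∀ y₂ ∈ Y, ∀ ε₁ ∈ A y₁, ∀ ε₂ ∈ A y₂, ∀ a b : ℝ, 0 ≤ a → 0 ≤ b →
      a + b = 1 → a * ε₁ + b * ε₂ ∈ A (a • y₁ + b • y₂)) :
    ConvexOn ℝ Y fun y => sInf (A y) := by
  refine ⟨hY, fun y₁ hy₁ y₂ hy₂ a b ha hb hab => le_of_forall_pos_le_add fun δ hδ => ?_⟩
  obtain ⟨ε₁, hε₁, hε₁_lt⟩ := Real.lt_sInf_add_pos (hne y₁ hy₁) hδ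
  obtain ⟨ε₂, hε₂, hε₂_lt⟩ := Real.lt_sInf_add_pos (hne y₂ hy₂) hδ
  have hinf : sInf (A (a • y₁ + b • y₂)) ≤ a * ε₁ + b * ε₂ :=
    csInf_le (hbdd _ (hY hy₁ hy₂ ha hb hab)) (hcombo y₁ hy₁ y₂ hy₂ ε₁ hε₁ ε₂ hε₂ a b ha hb hab)
  calc sInf (A (a • y₁ + b • y₂))
      ≤ a * (sInf (A y₁) + δ) + b * (sInf (A y₂) + δ) := by
        have := mul_le_mul_of_nonneg_left hε₁_lt.le ha
        have := mul_le_mul_of_nonneg_left hε₂_lt.le hb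
        linarith
    _ = a • sInf (A y₁) + b • sInf (A y₂) + δ := by
        simp only [smul_eq_mul]
        linear_combination δ * hab

end InfimalProjection

section LeastCore

variable {ι E : Type*} [Fintype ι]

def leastCoreSlacks (w : Finset ι → E → ℝ) (y : E) : Set ℝ :=
  {ε | ∃ x : ι → ℝ, ∑ i, x i = 1 ∧
    ∀ S : Finset ι, S.Nonempty → S ⊂ univ → w S y - ε ≤ ∑ i ∈ S, x i}

theorem leastCoreSlacks_nonempty [Nonempty ι] (w : Finset ι → E → ℝ) (y : E) :
    (leastCoreSlacks w y).Nonempty := by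
  classical
  obtain ⟨i₀⟩ := ‹Nonempty ι›
  let x : ι → ℝ := Pi.single i₀ 1
  obtain ⟨M, hM⟩ := Finite.exists_le fun S : Finset ι => w S y - ∑ i ∈ S, x i
  refine ⟨M, x, by simp [x, sum_pi_single'], fun S _ _ => ?_⟩
  linarith [hM S]

theorem leastCoreSlacks_bddBelow {w : Finset ι → E → ℝ} {S : Finset ι} (hS : S.Nonempty)
    (hSu : S ⊂ univ) (y : E) : BddBelow (leastCoreSlacks w y) := by
  classical
  have hSc : Sᶜ.Nonempty := by
    rw [nonempty_iff_ne_empty, Ne, compl_eq_empty_iff]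
    exact ssubset_univ_iff.mp hSu
  have hScu : Sᶜ ⊂ univ := ssubset_univ_iff.mpr ((compl_ne_univ_iff_nonempty S).mpr hS)
  refine ⟨(w S y + w Sᶜ y - 1) / 2, ?_⟩
  rintro ε ⟨x, hx, hcons⟩
  have := hcons S hS hSu
  have := hcons Sᶜ hSc hScu
  have := sum_add_sum_compl S x
  linarith

theorem leastCoreSlacks_combo [AddCommMonoid E] [Module ℝ E] {Y : Set E} {w : Finset ι → E → ℝ}
    (hconv : ∀ S : Finset ι, S.Nonempty → S ⊂ univ → ConvexOn ℝ Y (w S))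
    {y₁ y₂ : E} (hy₁ : y₁ ∈ Y) (hy₂ : y₂ ∈ Y) {ε₁ ε₂ : ℝ}
    (hε₁ : ε₁ ∈ leastCoreSlacks w y₁) (hε₂ : ε₂ ∈ leastCoreSlacks w y₂)
    {a b : ℝ} (ha : 0 ≤ a) (hb : 0 ≤ b) (hab : a + b = 1) :
    a * ε₁ + b * ε₂ ∈ leastCoreSlacks w (a • y₁ + b • y₂) := by
  obtain ⟨x₁, hx₁, hcons₁⟩ := hε₁
  obtain ⟨x₂, hx₂, hcons₂⟩ := hε₂
  have hsum (S : Finset ι) : ∑ i ∈ S, (a * x₁ i + b * x₂ i)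
      = a * ∑ i ∈ S, x₁ i + b * ∑ i ∈ S, x₂ i := by
    rw [sum_add_distrib, mul_sum, mul_sum]
  refine ⟨fun i => a * x₁ i + b * x₂ i, by rw [hsum, hx₁, hx₂, mul_one, mul_one, hab], ?_⟩
  intro S hS hSu
  have hw : w S (a • y₁ + b • y₂) ≤ a * w S y₁ + b * w S y₂ :=
    (hconv S hS hSu).2 hy₁ hy₂ ha hb hab
  have := mul_le_mul_of_nonneg_left (hcons₁ S hS hSu) ha
  have := mul_le_mul_of_nonneg_left (hcons₂ S hS hSu) hb
  rw [hsum]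
  linarith

theorem leastCoreSlacks_of_forall_not_proper (w : Finset ι → E → ℝ)
    (h : ∀ S : Finset ι, S.Nonempty → ¬S ⊂ univ) (y : E) :
    leastCoreSlacks w y = {_ε | ∃ x : ι → ℝ, ∑ i, x i = 1} := by
  ext ε
  exact ⟨fun ⟨x, hx, _⟩ => ⟨x, hx⟩, fun ⟨x, hx⟩ => ⟨x, hx, fun S hS hSu => absurd hSu (h S hS)⟩⟩

theorem convexOn_sInf_leastCoreSlacks [AddCommMonoid E] [Module ℝ E] {Y : Set E}
    (hY : Convex ℝ Y)
    {w : Finset ι → E → ℝ}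
    (hconv : ∀ S : Finset ι, S.Nonempty → S ⊂ univ → ConvexOn ℝ Y (w S)) :
    ConvexOn ℝ Y fun y => sInf (leastCoreSlacks w y) := by
  by_cases hproper : ∃ S : Finset ι, S.Nonempty ∧ S ⊂ univ
  · obtain ⟨S, hS, hSu⟩ := hproper
    have : Nonempty ι := hS.to_type
    exact convexOn_sInf_of_mem_combo hY (fun y _ => leastCoreSlacks_nonempty w y)
      (fun y _ => leastCoreSlacks_bddBelow hS hSu y)
      fun y₁ hy₁ y₂ hy₂ ε₁ hε₁ ε₂ hε₂ a b ha hb hab =>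
        leastCoreSlacks_combo hconv hy₁ hy₂ hε₁ hε₂ ha hb hab
  · push Not at hproper
    simp only [leastCoreSlacks_of_forall_not_proper w hproper]
    exact convexOn_const _ hY

end LeastCore

theorem stmt_19_general {ι : Type*} [Fintype ι]
    (Y : Set ℝ) (hY : Convex ℝ Y)
    (w : Finset ι → ℝ → ℝ)
    (hconv : ∀ S : Finset ι, S.Nonempty → S ⊂ Finset.univ → ConvexOn ℝ Y (w S)) :
    ConvexOn ℝ Y (fun y : ℝ =>
      sInf {ε : ℝ | ∃ x : ι → ℝ, (∑ i, x i) = 1 ∧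
        ∀ S : Finset ι, S.Nonempty → S ⊂ Finset.univ → w S y - ε ≤ ∑ i ∈ S, x i}) :=
  convexOn_sInf_leastCoreSlacks hY hconv

/-- The least-core value function
`σ(y) = min {ε : ∃ x, ∑_i x_i = 1 ∧ ∀ S ⊊ N, ∑_{i ∈ S} x_i ≥ v_max(y,S) - ε}`
is convex in `y` on `Y(N)`, provided each `v_max(·,S)` is convex on the convex set `Y(N)`. -/
theorem stmt_19 {ι : Type*} [Fintype ι] [Nonempty ι]
    (Y : Set ℝ) (hY : Convex ℝ Y)
    (w : Finset ι → ℝ → ℝ)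
    (hconv : ∀ S : Finset ι, S.Nonempty → S ⊂ Finset.univ → ConvexOn ℝ Y (w S)) :
    ConvexOn ℝ Y (fun y : ℝ =>
      sInf {ε : ℝ | ∃ x : ι → ℝ, (∑ i, x i) = 1 ∧
        ∀ S : Finset ι, S.Nonempty → S ⊂ Finset.univ → w S y - ε ≤ ∑ i ∈ S, x i}) :=
  stmt_19_general Y hY w hconv
end
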